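/- arXiv:2212.11660 — 6 statements merged into one kernel-verified Lean document; each statement's English description precedes it below -/
import Mathlib

section
/- If h : ℝ≥0 → ℝ≥0 is non-increasing with ∫₀^∞ h(u) du < ∞, Φ : ℝ≥0 → ℝ≥0 is continuous with Φ(0) > 0, and x = (x_k) is a sequence of nonnegative reals such that h(0) + Σ_{k≥1} h(x_1 + ⋯ + x_k) < ∞, then ∫₀^t Φ(h(s) + Σ_{k≥1} h(s + x_1 + ⋯ + x_k)) ds → +∞ as t → +∞. -/
open MeasureTheory Filter Topology

/-- If `h` is non-increasing nonnegative with finite integral, `Φ` continuous with `Φ 0 > 0`,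
and the series `h(0) + Σ_k h(x_1 + ⋯ + x_k)` converges, then the cumulative intensity
`∫₀^t Φ(h(s) + Σ_k h(s + x_1 + ⋯ + x_k)) ds` tends to infinity. -/
theorem stmt0 (h Φ : ℝ → ℝ) (x : ℕ → ℝ)
    (hmono : AntitoneOn h (Set.Ici 0)) (hpos : ∀ t, 0 ≤ t → 0 ≤ h t)
    (hint : IntegrableOn h (Set.Ioi 0))
    (hΦcont : Continuous Φ) (hΦ0 : 0 < Φ 0) (hΦpos : ∀ t, 0 ≤ Φ t)
    (hx : ∀ k, 0 ≤ x k)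
    (hsum : Summable (fun k : ℕ => h (∑ i ∈ Finset.range k, x i))) :
    Tendsto (fun t : ℝ => ∫ s in Set.Ioc (0:ℝ) t,
        Φ (∑' k : ℕ, h (s + ∑ i ∈ Finset.range k, x i))) atTop atTop := by
  set S : ℕ → ℝ := fun k => ∑ i ∈ Finset.range k, x i with hS
  have hSnn : ∀ k, 0 ≤ S k := fun k => Finset.sum_nonneg fun i _ => hx i
  -- extend h to a globally antitone function
  set h' : ℝ → ℝ := fun t => h (max t 0) with hh'
  have h'anti : Antitone h' := fun a b hab =>
    hmono (le_max_right a 0) (le_max_right b 0) (max_le_max hab le_rfl)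
  have h'nn : ∀ t, 0 ≤ h' t := fun t => hpos _ (le_max_right t 0)
  have h'eq : ∀ t, 0 ≤ t → h' t = h t := fun t ht => by
    simp only [hh', max_eq_left ht]
  -- the sum function
  set G : ℝ → ℝ := fun s => ∑' k, h' (max s 0 + S k) with hG
  have hsum' : ∀ s : ℝ, Summable (fun k => h' (max s 0 + S k)) := by
    intro s
    refine Summable.of_nonneg_of_le (fun k => h'nn _) (fun k => ?_) hsum
    calc h' (max s 0 + S k) ≤ h' (S k) := h'anti (le_add_of_nonneg_left (le_max_right s 0))
      _ = h (S k) := h'eq _ (hSnn k)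
  have hGanti : Antitone G := by
    intro a b hab
    exact Summable.tsum_le_tsum (fun k => h'anti (add_le_add_left (max_le_max hab le_rfl) (S k)))
      (hsum' b) (hsum' a)
  have hGnn : ∀ s, 0 ≤ G s := fun s => tsum_nonneg fun k => h'nn _
  have hGle : ∀ s, G s ≤ G 0 := by
    intro s
    rcases le_total 0 s with hs | hs
    · exact hGanti hs
    · have : G s = G 0 := by
        simp only [hG, max_eq_right hs, max_self]
      exact this.le
  -- h' tends to 0 at infinity
  have hbdd : BddBelow (Set.range h') := ⟨0, by rintro _ ⟨t, rfl⟩; exact h'nn t⟩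
  have hLlim : Tendsto h' atTop (𝓝 (⨅ t, h' t)) := tendsto_atTop_ciInf h'anti hbdd
  have hL0 : (⨅ t, h' t) = 0 := by
    by_contra hL
    have hLpos : 0 < ⨅ t, h' t := lt_of_le_of_ne (le_ciInf fun t => h'nn t) (Ne.symm hL)
    set L := ⨅ t, h' t
    have hlow : ∀ t : ℝ, L ≤ h' t := fun t => ciInf_le hbdd t
    have key : ∀ n : ℕ, L * n ≤ ∫ s in Set.Ioi (0:ℝ), h s := by
      intro n
      have h1 : L * (volume (Set.Ioc (0:ℝ) n)).toReal ≤ ∫ s in Set.Ioc (0:ℝ) n, h s := by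
        rw [mul_comm, ← smul_eq_mul]
        refine setIntegral_ge_of_const_le measurableSet_Ioc (by simp) (fun s hs => ?_)
          (hint.mono_set Set.Ioc_subset_Ioi_self)
        rw [← h'eq s hs.1.le]; exact hlow s
      have h2 : ∫ s in Set.Ioc (0:ℝ) n, h s ≤ ∫ s in Set.Ioi (0:ℝ), h s := by
        refine setIntegral_mono_set hint ?_ (Set.Ioc_subset_Ioi_self).eventuallyLE
        exact (ae_restrict_iff' measurableSet_Ioi).mpr (ae_of_all _ fun s hs => hpos s hs.le)
      have h3 : (volume (Set.Ioc (0:ℝ) n)).toReal = n := by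
        rw [Real.volume_Ioc, sub_zero, ENNReal.toReal_ofReal (Nat.cast_nonneg n)]
      rw [h3] at h1
      linarith
    obtain ⟨n, hn⟩ := exists_nat_gt ((∫ s in Set.Ioi (0:ℝ), h s) / L)
    have h4 : (∫ s in Set.Ioi (0:ℝ), h s) < (n:ℝ) * L := (div_lt_iff₀ hLpos).mp hn
    rw [mul_comm] at h4
    linarith [key n]
  rw [hL0] at hLlim
  -- G tends to 0
  have hGlim : Tendsto G atTop (𝓝 0) := by
    have hmax : Tendsto (fun s : ℝ => max s 0) atTop atTop :=
      tendsto_atTop_mono (fun s => le_max_left s 0) tendsto_id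
    have := tendsto_tsum_of_dominated_convergence (f := fun (s : ℝ) (k : ℕ) => h' (max s 0 + S k))
      (g := fun _ => (0:ℝ)) (bound := fun k => h (S k)) hsum
      (fun k => hLlim.comp (tendsto_atTop_add_const_right _ (S k) hmax))
      (Eventually.of_forall fun s k => by
        rw [Real.norm_eq_abs, abs_of_nonneg (h'nn _)]
        calc h' (max s 0 + S k) ≤ h' (S k) := h'anti (le_add_of_nonneg_left (le_max_right s 0))
          _ = h (S k) := h'eq _ (hSnn k))
    simpa [tsum_zero] using this
  -- eventually Φ (G s) ≥ Φ 0 / 2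
  set ε := Φ 0 / 2 with hε
  have hεpos : 0 < ε := by positivity
  have hev : ∀ᶠ s : ℝ in atTop, ε ≤ Φ (G s) := by
    have : Tendsto (fun s => Φ (G s)) atTop (𝓝 (Φ 0)) :=
      (hΦcont.tendsto 0).comp hGlim
    exact this.eventually (eventually_ge_nhds (by rw [hε]; linarith))
  obtain ⟨T₀, hT₀⟩ := hev.exists_forall_of_atTop
  set T := max T₀ 0 with hT
  have hTnn : 0 ≤ T := le_max_right _ _
  have hTε : ∀ s, T ≤ s → ε ≤ Φ (G s) := fun s hs => hT₀ s ((le_max_left _ _).trans hs)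
  -- boundedness of Φ on the range of G
  obtain ⟨y, hy, hymax⟩ := (isCompact_Icc (a := (0:ℝ)) (b := G 0)).exists_isMaxOn
    ⟨0, le_rfl, hGnn 0⟩ (hΦcont.continuousOn)
  set M := Φ y with hM
  have hMb : ∀ s, Φ (G s) ≤ M := fun s => hymax ⟨hGnn s, hGle s⟩
  -- integrability of Φ ∘ G on bounded intervals
  have hGm : Measurable G := hGanti.measurable
  have hmeas : Measurable fun s => Φ (G s) := hΦcont.measurable.comp hGm
  have hintOn : ∀ a b : ℝ, IntegrableOn (fun s => Φ (G s)) (Set.Ioc a b) := by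
    intro a b
    refine Integrable.mono' (integrable_const M) hmeas.aestronglyMeasurable ?_
    refine ae_of_all _ fun s => ?_
    rw [Real.norm_eq_abs, abs_of_nonneg (hΦpos _)]
    exact hMb s
  -- the integrand equals Φ ∘ G on Ioc 0 t
  have hcongr : ∀ t : ℝ, (∫ s in Set.Ioc (0:ℝ) t,
      Φ (∑' k : ℕ, h (s + ∑ i ∈ Finset.range k, x i))) = ∫ s in Set.Ioc (0:ℝ) t, Φ (G s) := by
    intro t
    refine setIntegral_congr_fun measurableSet_Ioc fun s hs => ?_
    congr 1
    rw [hG]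
    simp only [max_eq_left hs.1.le]
    exact tsum_congr fun k => (h'eq (s + S k) (add_nonneg hs.1.le (hSnn k))).symm
  -- lower bound and conclusion
  have hlower : ∀ t : ℝ, T ≤ t →
      ε * (t - T) ≤ ∫ s in Set.Ioc (0:ℝ) t, Φ (G s) := by
    intro t ht
    have h1 : ε * (volume (Set.Ioc T t)).toReal ≤ ∫ s in Set.Ioc T t, Φ (G s) := by
      rw [mul_comm, ← smul_eq_mul]
      exact setIntegral_ge_of_const_le measurableSet_Ioc (by simp)
        (fun s hs => hTε s hs.1.le) (hintOn T t)
    have h2 : ∫ s in Set.Ioc T t, Φ (G s) ≤ ∫ s in Set.Ioc (0:ℝ) t, Φ (G s) := by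
      refine setIntegral_mono_set (hintOn 0 t) (ae_of_all _ fun s => hΦpos _) ?_
      exact (Set.Ioc_subset_Ioc_left hTnn).eventuallyLE
    have h3 : (volume (Set.Ioc T t)).toReal = t - T := by
      rw [Real.volume_Ioc, ENNReal.toReal_ofReal (by linarith)]
    rw [h3] at h1
    linarith
  have hmain : Tendsto (fun t : ℝ => ∫ s in Set.Ioc (0:ℝ) t, Φ (G s)) atTop atTop := by
    refine tendsto_atTop_mono' atTop (f₁ := fun t => ε * (t - T)) ?_ ?_
    · filter_upwards [eventually_ge_atTop T] with t ht using hlower t ht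
    · exact (tendsto_atTop_add_const_right _ (-T) tendsto_id).const_mul_atTop hεpos
  exact hmain.congr fun t => (hcongr t).symm
end

section
/- Suppose Φ : ℝ₊ → ℝ₊ satisfies Φ(x) ≤ ν + β₀ x for all x ≥ 0 (ν > 0, β₀ ≥ 0), h : ℝ₊ → ℝ₊ is non-increasing with α = ∫₀^∞ h < ∞, and (X_k^0)_{k≥1}, (E_k)_{k≥1} satisfy for each n ≥ 1: E_n = ∫₀^{X_n^0} Φ(Σ_{k=1}^n h(s + Σ_{i=k}^{n-1} X_i^0)) ds. Then for all n ≥ 1, Σ_{k=1}^n (E_k - αβ₀) ≤ ν Σ_{k=1}^n X_k^0 - β₀ Σ_{k=1}^n H̄(Σ_{j=k}^n X_j^0), where H̄(x) = ∫_x^∞ h(s) ds. -/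
open MeasureTheory Filter

/-- Translation lemma: for `0 ≤ T`, `0 ≤ X`, the shifted tail kernel is integrable on
`Ioc 0 X` and its integral telescopes the tail integral. -/
lemma hawkes_shift (h : ℝ → ℝ) (hint : IntegrableOn h (Set.Ioi 0))
    (T X : ℝ) (hT : 0 ≤ T) (hX : 0 ≤ X) :
    IntegrableOn (fun s => h (s + T)) (Set.Ioc 0 X) ∧
      ∫ s in Set.Ioc 0 X, h (s + T)
        = (∫ s in Set.Ioi T, h s) - ∫ s in Set.Ioi (T + X), h s := by
  have hTX : T ≤ T + X := by linarith
  have h1 : IntegrableOn h (Set.Ioc T (T + X)) := by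
    refine hint.mono_set ?_
    intro x hx
    exact lt_of_le_of_lt hT hx.1
  have h2 : IntegrableOn h (Set.Ioi (T + X)) := by
    refine hint.mono_set ?_
    intro x hx
    exact lt_of_le_of_lt (by linarith : (0:ℝ) ≤ T + X) hx
  have hii : IntervalIntegrable h volume T (T + X) :=
    (intervalIntegrable_iff_integrableOn_Ioc_of_le hTX).mpr h1
  have hcomp := hii.comp_add_right T
  have hc0 : IntervalIntegrable (fun x => h (x + T)) volume 0 X := by
    simpa using hcomp
  have hint0 : IntegrableOn (fun s => h (s + T)) (Set.Ioc 0 X) :=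
    (intervalIntegrable_iff_integrableOn_Ioc_of_le hX).mp hc0
  refine ⟨hint0, ?_⟩
  have e1 : ∫ s in Set.Ioc 0 X, h (s + T) = ∫ s in (0:ℝ)..X, h (s + T) :=
    (intervalIntegral.integral_of_le hX).symm
  have e2 : ∫ s in (0:ℝ)..X, h (s + T) = ∫ s in T..(T + X), h s := by
    rw [intervalIntegral.integral_comp_add_right]
    norm_num [add_comm]
  have e3 : ∫ s in T..(T + X), h s = ∫ s in Set.Ioc T (T + X), h s :=
    intervalIntegral.integral_of_le hTX
  have e4 : ∫ s in Set.Ioi T, h s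
      = (∫ s in Set.Ioc T (T + X), h s) + ∫ s in Set.Ioi (T + X), h s := by
    rw [← setIntegral_union (Set.Ioc_disjoint_Ioi le_rfl) measurableSet_Ioi h1 h2,
      Set.Ioc_union_Ioi_eq_Ioi hTX]
  rw [e1, e2, e3]
  linarith

/-- Pathwise inequality for the Hawkes chain started from the empty state: with
`Φ(x) ≤ ν + β₀x`, `α = ∫₀^∞ h` and the defining equations for `(X_k⁰, E_k)`,
`Σ_{k=1}^n (E_k - αβ₀) ≤ ν Σ_{k=1}^n X_k⁰ - β₀ Σ_{k=1}^n H̄(Σ_{j=k}^n X_j⁰)`. -/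
theorem stmt9 (h Φ : ℝ → ℝ) (ν β₀ α : ℝ) (hν : 0 < ν) (hβ₀ : 0 ≤ β₀)
    (hpos : ∀ t, 0 ≤ t → 0 ≤ h t) (hmono : AntitoneOn h (Set.Ici 0))
    (hint : IntegrableOn h (Set.Ioi 0))
    (hα : α = ∫ s in Set.Ioi 0, h s)
    (hΦ : ∀ x, 0 ≤ x → Φ x ≤ ν + β₀ * x) (hΦpos : ∀ x, 0 ≤ Φ x)
    (X E : ℕ → ℝ) (hX : ∀ k, 0 ≤ X k)
    (hE : ∀ n, 1 ≤ n → E n = ∫ s in Set.Ioc 0 (X n),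
        Φ (∑ k ∈ Finset.Icc 1 n, h (s + ∑ i ∈ Finset.Ico k n, X i)))
    (Hbar : ℝ → ℝ) (hHbar : ∀ x, Hbar x = ∫ s in Set.Ioi x, h s) :
    ∀ n, 1 ≤ n →
      ∑ k ∈ Finset.Icc 1 n, (E k - α * β₀)
        ≤ ν * ∑ k ∈ Finset.Icc 1 n, X k
          - β₀ * ∑ k ∈ Finset.Icc 1 n, Hbar (∑ j ∈ Finset.Icc k n, X j) := by
  have hXsum : ∀ (s : Finset ℕ), 0 ≤ ∑ i ∈ s, X i :=
    fun s => Finset.sum_nonneg fun i _ => hX i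
  have hHbar0 : Hbar 0 = α := by rw [hHbar, hα]
  -- key per-step estimate
  have key : ∀ n, 1 ≤ n → E n ≤ ν * X n
      + β₀ * ∑ k ∈ Finset.Icc 1 n,
          (Hbar (∑ i ∈ Finset.Ico k n, X i) - Hbar (∑ i ∈ Finset.Icc k n, X i)) := by
    intro n hn
    set T : ℕ → ℝ := fun k => ∑ i ∈ Finset.Ico k n, X i with hT
    have hTnn : ∀ k, 0 ≤ T k := fun k => hXsum _
    have hshift : ∀ k, IntegrableOn (fun s => h (s + T k)) (Set.Ioc 0 (X n)) ∧
        ∫ s in Set.Ioc 0 (X n), h (s + T k)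
          = (∫ s in Set.Ioi (T k), h s) - ∫ s in Set.Ioi (T k + X n), h s :=
      fun k => hawkes_shift h hint (T k) (X n) (hTnn k) (hX n)
    set G : ℝ → ℝ := fun s => ν + β₀ * ∑ k ∈ Finset.Icc 1 n, h (s + T k) with hG
    have hGint : IntegrableOn G (Set.Ioc 0 (X n)) := by
      apply Integrable.add (integrable_const ν)
      exact Integrable.const_mul
        (integrable_finset_sum _ fun k _ => (hshift k).1) β₀
    have hbound : E n ≤ ∫ s in Set.Ioc 0 (X n), G s := by
      rw [hE n hn]
      refine integral_mono_of_nonneg (ae_of_all _ fun s => hΦpos _) hGint ?_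
      refine (ae_restrict_iff' measurableSet_Ioc).mpr (ae_of_all _ fun s hs => ?_)
      have hsum0 : 0 ≤ ∑ k ∈ Finset.Icc 1 n, h (s + T k) :=
        Finset.sum_nonneg fun k _ => hpos _ (by have := hs.1; have := hTnn k; linarith)
      exact hΦ _ hsum0
    have hGval : ∫ s in Set.Ioc 0 (X n), G s = ν * X n
        + β₀ * ∑ k ∈ Finset.Icc 1 n,
            (Hbar (∑ i ∈ Finset.Ico k n, X i) - Hbar (∑ i ∈ Finset.Icc k n, X i)) := by
      rw [hG]
      rw [integral_add (integrable_const ν)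
        (Integrable.const_mul (integrable_finset_sum _ fun k _ => (hshift k).1) β₀)]
      rw [setIntegral_const, Real.volume_real_Ioc_of_le (hX n), smul_eq_mul]
      rw [MeasureTheory.integral_const_mul, integral_finset_sum _ fun k _ => (hshift k).1]
      have : ∀ k ∈ Finset.Icc 1 n, ∫ s in Set.Ioc 0 (X n), h (s + T k)
          = Hbar (∑ i ∈ Finset.Ico k n, X i) - Hbar (∑ i ∈ Finset.Icc k n, X i) := by
        intro k hk
        rw [(hshift k).2, hHbar, hHbar]
        have hIccIco : ∑ i ∈ Finset.Icc k n, X i = T k + X n := by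
          rw [hT]
          have hkn : k ≤ n := (Finset.mem_Icc.mp hk).2
          rw [← Finset.Ico_add_one_right_eq_Icc, Finset.sum_Ico_succ_top hkn]
        rw [hIccIco]
      rw [Finset.sum_congr rfl this]
      ring
    linarith
  intro n hn
  induction n, hn using Nat.le_induction with
  | base =>
    have hk := key 1 le_rfl
    simp only [Finset.Icc_self, Finset.sum_singleton, Finset.Ico_self,
      Finset.sum_empty] at hk ⊢
    rw [hHbar0] at hk
    linarith
  | succ n hn ih =>
    have hk := key (n + 1) (by omega)
    -- rewrite the Ico sums in `hk`
    have hIco : ∀ k, ∑ i ∈ Finset.Ico k (n + 1), X i = ∑ i ∈ Finset.Icc k n, X i := by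
      intro k; rw [Finset.Ico_add_one_right_eq_Icc]
    simp only [hIco] at hk
    rw [Finset.sum_sub_distrib] at hk
    -- split off the k = n+1 term of the first inner sum
    have hnot : (n + 1) ∉ Finset.Icc 1 n := by simp
    have hins : Finset.Icc 1 (n + 1) = insert (n + 1) (Finset.Icc 1 n) := by
      ext x; simp only [Finset.mem_Icc, Finset.mem_insert]; omega
    have hsplit : ∑ k ∈ Finset.Icc 1 (n + 1), Hbar (∑ i ∈ Finset.Icc k n, X i)
        = α + ∑ k ∈ Finset.Icc 1 n, Hbar (∑ i ∈ Finset.Icc k n, X i) := by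
      rw [hins, Finset.sum_insert hnot]
      have : ∑ i ∈ Finset.Icc (n + 1) n, X i = 0 := by
        rw [Finset.Icc_eq_empty (by omega), Finset.sum_empty]
      rw [this, hHbar0]
    rw [hsplit] at hk
    -- expand the outer sums at n+1
    rw [hins, Finset.sum_insert hnot, Finset.sum_insert hnot, Finset.sum_insert hnot]
    rw [hins, Finset.sum_insert hnot] at hk
    linarith
end

section
/- Backward monotonicity for the affine Hawkes chain: let Φ_β(x) = ν + βx with ν, β > 0 and h non-increasing nonnegative. Define for each n the finite sequence (Ỹ_k^n)_{1≤k≤n} backwards by ∫₀^{Ỹ_n^n} Φ_β(h(u)) du = E_n and for 1 ≤ k < n, ∫₀^{Ỹ_k^n} Φ_β(Σ_{i=k}^n h(u + Σ_{j=k+1}^i Ỹ_j^n)) du = E_k, using the same fixed positive reals (E_k). Then for every n ≥ 1 and 1 ≤ k ≤ n, Ỹ_k^{n+1} ≤ Ỹ_k^n. -/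
open MeasureTheory Filter

/-- Backward monotonicity for the affine Hawkes chain: with `Φ_β(x) = ν + βx`, `h`
non-increasing nonnegative and the backward sequences `(Ỹ_k^n)_{1≤k≤n}` defined by
`∫₀^{Ỹ_k^n} Φ_β(Σ_{i=k}^n h(u + Σ_{j=k+1}^i Ỹ_j^n)) du = E_k`, one has
`Ỹ_k^{n+1} ≤ Ỹ_k^n` for all `n ≥ 1`, `1 ≤ k ≤ n`. -/
theorem stmt12 (h : ℝ → ℝ) (ν β : ℝ) (hν : 0 < ν) (hβ : 0 < β)
    (hmono : AntitoneOn h (Set.Ici 0)) (hpos : ∀ t, 0 ≤ t → 0 ≤ h t)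
    (E : ℕ → ℝ) (hE : ∀ k, 0 < E k)
    (Y : ℕ → ℕ → ℝ) (hYpos : ∀ n k, 0 ≤ Y n k)
    (hdef : ∀ n k, 1 ≤ k → k ≤ n →
      ∫ u in Set.Ioc 0 (Y n k),
        (ν + β * ∑ i ∈ Finset.Icc k n, h (u + ∑ j ∈ Finset.Icc (k+1) i, Y n j)) = E k) :
    ∀ n k, 1 ≤ n → 1 ≤ k → k ≤ n → Y (n+1) k ≤ Y n k := by
  intro n k₀ hn hk₀ hk₀n
  have step : ∀ k, 1 ≤ k → k ≤ n →
      (∀ j, k + 1 ≤ j → j ≤ n → Y (n+1) j ≤ Y n j) → Y (n+1) k ≤ Y n k := by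
    intro k hk hkn IH
    by_contra hcon
    push_neg at hcon
    set a := Y n k with ha_def
    set b := Y (n+1) k with hb_def
    have ha0 : 0 ≤ a := hYpos n k
    set f : ℝ → ℝ :=
      fun u => ν + β * ∑ i ∈ Finset.Icc k n, h (u + ∑ j ∈ Finset.Icc (k+1) i, Y n j) with hf_def
    set g : ℝ → ℝ :=
      fun u => ν + β * ∑ i ∈ Finset.Icc k (n+1),
        h (u + ∑ j ∈ Finset.Icc (k+1) i, Y (n+1) j) with hg_def
    have hf : ∫ u in Set.Ioc 0 a, f u = E k := hdef n k hk hkn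
    have hg : ∫ u in Set.Ioc 0 b, g u = E k := hdef (n+1) k hk (by omega)
    have hgint : IntegrableOn g (Set.Ioc 0 b) := by
      by_contra hni
      rw [MeasureTheory.integral_undef hni] at hg
      exact absurd hg.symm (ne_of_gt (hE k))
    have hfint : IntegrableOn f (Set.Ioc 0 a) := by
      by_contra hni
      rw [MeasureTheory.integral_undef hni] at hf
      exact absurd hf.symm (ne_of_gt (hE k))
    have hsum_nn : ∀ (m i : ℕ), 0 ≤ ∑ j ∈ Finset.Icc (k+1) i, Y m j := by
      intro m i
      exact Finset.sum_nonneg fun j _ => hYpos m j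
    have harg_nn : ∀ u : ℝ, 0 < u → ∀ (m i : ℕ),
        0 ≤ u + ∑ j ∈ Finset.Icc (k+1) i, Y m j := by
      intro u hu m i
      have := hsum_nn m i
      linarith
    -- pointwise: ν ≤ g on Ioc a b
    have hgν : ∀ u ∈ Set.Ioc a b, (ν : ℝ) ≤ g u := by
      intro u hu
      have hu0 : 0 < u := lt_of_le_of_lt ha0 hu.1
      have : 0 ≤ ∑ i ∈ Finset.Icc k (n+1),
          h (u + ∑ j ∈ Finset.Icc (k+1) i, Y (n+1) j) :=
        Finset.sum_nonneg fun i _ => hpos _ (harg_nn u hu0 (n+1) i)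
      have := mul_nonneg hβ.le this
      simp only [hg_def]
      linarith
    -- pointwise: f ≤ g on Ioc 0 a
    have hfg : ∀ u ∈ Set.Ioc 0 a, f u ≤ g u := by
      intro u hu
      have hu0 : 0 < u := hu.1
      simp only [hf_def, hg_def]
      have hsplit : ∑ i ∈ Finset.Icc k (n+1),
          h (u + ∑ j ∈ Finset.Icc (k+1) i, Y (n+1) j)
          = (∑ i ∈ Finset.Icc k n, h (u + ∑ j ∈ Finset.Icc (k+1) i, Y (n+1) j))
            + h (u + ∑ j ∈ Finset.Icc (k+1) (n+1), Y (n+1) j) :=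
        Finset.sum_Icc_succ_top (by omega) _
      have hterm : ∀ i ∈ Finset.Icc k n,
          h (u + ∑ j ∈ Finset.Icc (k+1) i, Y n j)
          ≤ h (u + ∑ j ∈ Finset.Icc (k+1) i, Y (n+1) j) := by
        intro i hi
        have hi' := Finset.mem_Icc.mp hi
        have hsle : ∑ j ∈ Finset.Icc (k+1) i, Y (n+1) j
            ≤ ∑ j ∈ Finset.Icc (k+1) i, Y n j := by
          apply Finset.sum_le_sum
          intro j hj
          have hj' := Finset.mem_Icc.mp hj
          exact IH j hj'.1 (le_trans hj'.2 hi'.2)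
        exact hmono (harg_nn u hu0 (n+1) i) (harg_nn u hu0 n i) (by linarith)
      have h1 : ∑ i ∈ Finset.Icc k n, h (u + ∑ j ∈ Finset.Icc (k+1) i, Y n j)
          ≤ ∑ i ∈ Finset.Icc k n, h (u + ∑ j ∈ Finset.Icc (k+1) i, Y (n+1) j) :=
        Finset.sum_le_sum hterm
      have h2 : 0 ≤ h (u + ∑ j ∈ Finset.Icc (k+1) (n+1), Y (n+1) j) :=
        hpos _ (harg_nn u hu0 (n+1) (n+1))
      nlinarith [hβ.le]
    have hsub1 : Set.Ioc (0:ℝ) a ⊆ Set.Ioc 0 b := Set.Ioc_subset_Ioc_right hcon.le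
    have hsub2 : Set.Ioc a b ⊆ Set.Ioc (0:ℝ) b := Set.Ioc_subset_Ioc_left ha0
    have hsplit : ∫ u in Set.Ioc 0 b, g u
        = (∫ u in Set.Ioc 0 a, g u) + ∫ u in Set.Ioc a b, g u := by
      rw [← MeasureTheory.setIntegral_union (Set.Ioc_disjoint_Ioc_of_le le_rfl) measurableSet_Ioc
        (hgint.mono_set hsub1) (hgint.mono_set hsub2),
        Set.Ioc_union_Ioc_eq_Ioc ha0 hcon.le]
    have h1 : ∫ u in Set.Ioc 0 a, f u ≤ ∫ u in Set.Ioc 0 a, g u :=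
      MeasureTheory.setIntegral_mono_on hfint (hgint.mono_set hsub1) measurableSet_Ioc hfg
    have h2 : ν * (b - a) ≤ ∫ u in Set.Ioc a b, g u := by
      have hc : ∫ u in Set.Ioc a b, (ν : ℝ) ≤ ∫ u in Set.Ioc a b, g u :=
        MeasureTheory.setIntegral_mono_on (integrableOn_const (by
          simp [Real.volume_Ioc] )) (hgint.mono_set hsub2) measurableSet_Ioc hgν
      rwa [MeasureTheory.setIntegral_const, Real.volume_real_Ioc,
        max_eq_left (by linarith : (0:ℝ) ≤ b - a), smul_eq_mul, mul_comm] at hc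
    have hpos2 : 0 < ν * (b - a) := mul_pos hν (by linarith)
    linarith [hg, hf, hsplit, h1, h2]
  suffices H : ∀ d k, 1 ≤ k → k ≤ n → n - k ≤ d → Y (n+1) k ≤ Y n k from
    H (n - k₀) k₀ hk₀ hk₀n le_rfl
  intro d
  induction d with
  | zero =>
    intro k hk hkn hd
    exact step k hk hkn fun j hj1 hj2 => absurd (And.intro hj1 hj2) (by omega)
  | succ d ih =>
    intro k hk hkn hd
    exact step k hk hkn fun j hj1 hj2 => ih j (by omega) hj2 (by omega)
end

section
/- In the affine stationary case, E(Y₁^∞) = (1 - αβ)/ν: if (Y_n^∞)_{n≥1} is a stationary sequence of positive integrable random variables such that ∫₀^{Y_n^∞} (ν + β Σ_{i≥n} h(u + Σ_{j=n+1}^i Y_j^∞)) du is exponential(1) for each n, with αβ < 1 and α = ∫₀^∞ h, then E(Y₁^∞) = (1 - αβ)/ν. -/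
open MeasureTheory Filter Topology

/-- Discrete intermediate value / bracketing lemma. -/
lemma stmt13_bracket {u : ℕ → ℝ} {v : ℝ} (N : ℕ) (h0 : v ≤ u 0) (hN : u N < v) :
    ∃ i, 1 ≤ i ∧ i ≤ N ∧ u i < v ∧ v ≤ u (i - 1) := by
  have hex : ∃ i, u i < v := ⟨N, hN⟩
  classical
  set k := Nat.find hex with hk
  have hks : u k < v := Nat.find_spec hex
  have hkN : k ≤ N := Nat.find_min' hex hN
  have hk0 : k ≠ 0 := by
    intro h0'
    rw [h0'] at hks; exact absurd h0 (not_le.mpr hks)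
  have hpred : ¬ u (k - 1) < v := Nat.find_min hex (Nat.pred_lt hk0)
  exact ⟨k, Nat.one_le_iff_ne_zero.mpr hk0, hkN, hks, not_lt.mp hpred⟩

/-- Mean inter-arrival of the stationary affine Hawkes sequence: if `(Y_n^∞)_{n≥1}` is a
stationary sequence of positive integrable random variables such that
`∫₀^{Y_n^∞} (ν + β Σ_{i≥n} h(u + Σ_{j=n+1}^i Y_j^∞)) du` is exponential(1) for each `n ≥ 1`,
with `α = ∫₀^∞ h` and `αβ < 1`, then `E(Y₁^∞) = (1 - αβ)/ν`. -/
theorem stmt13 {Ω : Type*} [MeasurableSpace Ω] (P : Measure Ω) [IsProbabilityMeasure P]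
    (h : ℝ → ℝ) (ν β α : ℝ) (hν : 0 < ν) (hβ : 0 < β)
    (hmono : AntitoneOn h (Set.Ici 0)) (hpos : ∀ t, 0 ≤ t → 0 ≤ h t)
    (hint : IntegrableOn h (Set.Ioi 0)) (hα : α = ∫ s in Set.Ioi 0, h s)
    (hαβ : α * β < 1)
    (Y : ℕ → Ω → ℝ) (hYm : ∀ n, Measurable (Y n))
    (hYpos : ∀ n ω, 0 < Y n ω) (hYint : ∀ n, Integrable (Y n) P)
    (hstat : ∀ n, 1 ≤ n →
      Measure.map (fun ω (k : ℕ) => Y (n + k) ω) P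
        = Measure.map (fun ω (k : ℕ) => Y (1 + k) ω) P)
    (hexp : ∀ n, 1 ≤ n → ∀ t : ℝ, 0 ≤ t →
      P {ω | (∫ u in Set.Ioc 0 (Y n ω),
          (ν + β * ∑' m : ℕ, h (u + ∑ j ∈ Finset.Icc (n+1) (n+m), Y j ω))) ≤ t}
        = ENNReal.ofReal (1 - Real.exp (-t))) :
    ∫ ω, Y 1 ω ∂P = (1 - α * β) / ν := by
  classical
  -- modified kernel, measurable
  set h' : ℝ → ℝ := fun t => h (max t 0) with hh'def
  have h'anti : Antitone h' := fun s t hst =>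
    hmono (Set.mem_Ici.mpr (le_max_right s 0)) (Set.mem_Ici.mpr (le_max_right t 0))
      (max_le_max hst le_rfl)
  have h'meas : Measurable h' := h'anti.measurable
  have h'nonneg : ∀ t, 0 ≤ h' t := fun t => hpos _ (le_max_right t 0)
  have h'eq : ∀ t : ℝ, 0 ≤ t → h' t = h t := fun t ht => by
    simp only [hh'def, max_eq_left ht]
  -- partial sums
  set T : ℕ → Ω → ℝ := fun m ω => ∑ j ∈ Finset.Icc (1+1) (1+m), Y j ω with hTdef
  have hTmeas : ∀ m, Measurable (T m) := fun m => Finset.measurable_sum _ fun j _ => hYm j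
  have hTnonneg : ∀ m ω, 0 ≤ T m ω := fun m ω =>
    Finset.sum_nonneg fun j _ => (hYpos j ω).le
  -- the bracketing events
  set A : ℕ → ℝ → Set Ω := fun m v => {ω | T m ω < v ∧ v ≤ T m ω + Y 1 ω} with hAdef
  have hAmeas : ∀ m v, MeasurableSet (A m v) := fun m v =>
    (measurableSet_lt (hTmeas m) measurable_const).inter
      (measurableSet_le measurable_const ((hTmeas m).add (hYm 1)))
  -- shifted sequences
  set seq : ℕ → Ω → (ℕ → ℝ) := fun n ω k => Y (n + k) ω with hseqdef
  have hseqmeas : ∀ n, Measurable (seq n) := fun n =>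
    measurable_pi_lambda _ fun k => hYm (n + k)
  -- sums over shifted windows
  have hshift : ∀ (n m : ℕ) (ω : Ω),
      (∑ k ∈ Finset.Ioc 0 m, seq n ω k) = ∑ j ∈ Finset.Ioc n (n + m), Y j ω := by
    intro n m ω
    have : Finset.Ioc n (n + m) = Finset.map (addLeftEmbedding n) (Finset.Ioc 0 m) := by
      rw [Finset.map_add_left_Ioc, add_zero]
    rw [this, Finset.sum_map]
    rfl
  have hTIoc : ∀ m ω, T m ω = ∑ j ∈ Finset.Ioc 1 (1 + m), Y j ω := by
    intro m ω
    simp only [hTdef, Finset.Icc_add_one_left_eq_Ioc]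
  -- total partial sums
  set W : ℕ → Ω → ℝ := fun N ω => ∑ j ∈ Finset.Ioc 0 N, Y j ω with hWdef
  have hWmeas : ∀ N, Measurable (W N) := fun N => Finset.measurable_sum _ fun j _ => hYm j
  -- STEP III : divergence of partial sums
  have hdiv : ∀ v : ℝ, 0 < v → P (⋂ N, {ω | W N ω < v}) = 0 := by
    intro v hv
    have key : ∀ ε : ℝ, 0 < ε → P (⋂ N, {ω | W N ω < v}) ≤ P {ω | Y 1 ω ≤ ε} := by
      intro ε hε
      set Q : Set (ℕ → ℝ) := {z | ∀ j, z j ≤ ε} with hQdef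
      have hQmeas : MeasurableSet Q := by
        have : Q = ⋂ j, {z : ℕ → ℝ | z j ≤ ε} := by
          ext z; simp [hQdef]
        rw [this]
        exact MeasurableSet.iInter fun j =>
          measurableSet_le (measurable_pi_apply j) measurable_const
      set E : ℕ → Set Ω := fun k => seq (k + 1) ⁻¹' Q with hEdef
      have hEsub : (⋂ N, {ω | W N ω < v}) ⊆ ⋃ k, E k := by
        intro ω hω
        simp only [Set.mem_iInter, Set.mem_setOf_eq] at hω
        by_contra hcon
        simp only [Set.mem_iUnion, hEdef, Set.mem_preimage, hQdef, Set.mem_setOf_eq,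
          not_exists, not_forall, not_le, hseqdef] at hcon
        have hinf : {n : ℕ | 1 ≤ n ∧ ε < Y n ω}.Infinite := by
          intro hfin
          obtain ⟨b, hb⟩ := hfin.bddAbove
          obtain ⟨j, hj⟩ := hcon b
          exact absurd (hb ⟨by omega, hj⟩) (by omega)
        obtain ⟨t, hts, htcard⟩ := hinf.exists_subset_card_eq (Nat.ceil (v / ε) + 1)
        set N := t.sup id with hNdef
        have htsub : t ⊆ Finset.Ioc 0 N := by
          intro j hj
          have h1 : 1 ≤ j := (hts hj).1
          have h2 : j ≤ N := Finset.le_sup (f := id) hj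
          exact Finset.mem_Ioc.mpr ⟨by omega, h2⟩
        have h1 : (t.card : ℝ) * ε ≤ ∑ j ∈ t, Y j ω := by
          have := Finset.card_nsmul_le_sum t (fun j => Y j ω) ε
            (fun j hj => (hts hj).2.le)
          simpa [nsmul_eq_mul] using this
        have h2 : (∑ j ∈ t, Y j ω) ≤ W N ω :=
          Finset.sum_le_sum_of_subset_of_nonneg htsub (fun j _ _ => (hYpos j ω).le)
        have h3 : v < (t.card : ℝ) * ε := by
          rw [htcard]
          push_cast
          have hle : v / ε ≤ (Nat.ceil (v / ε) : ℝ) := Nat.le_ceil _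
          have : v / ε * ε ≤ (Nat.ceil (v / ε) : ℝ) * ε := by nlinarith
          rw [div_mul_cancel₀ v hε.ne'] at this
          nlinarith
        linarith [hω N]
      have hEmono : Monotone E := by
        intro k k' hkk' ω hω
        intro j
        have := hω (k' - k + j)
        simpa [hseqdef, show k + 1 + (k' - k + j) = k' + 1 + j by omega] using this
      have hEeq : ∀ k, P (E k) = P (E 0) := by
        intro k
        have hmap : ∀ n, Measure.map (seq n) P Q = P (seq n ⁻¹' Q) := fun n =>
          Measure.map_apply (hseqmeas n) hQmeas
        have h1 : Measure.map (seq (k + 1)) P = Measure.map (seq 1) P := hstat (k + 1) (by omega)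
        have := congrArg (fun μ : Measure (ℕ → ℝ) => μ Q) h1
        simp only [hmap] at this
        simpa [hEdef] using this
      calc P (⋂ N, {ω | W N ω < v}) ≤ P (⋃ k, E k) := measure_mono hEsub
        _ = ⨆ k, P (E k) := hEmono.measure_iUnion
        _ ≤ P (E 0) := by
            apply iSup_le
            intro k
            rw [hEeq k]
        _ ≤ P {ω | Y 1 ω ≤ ε} := by
            apply measure_mono
            intro ω hω
            have := hω 0
            simpa [hseqdef] using this
    have hseqlim : Tendsto (fun n : ℕ => P {ω | Y 1 ω ≤ 1 / ((n : ℝ) + 1)}) atTop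
        (𝓝 (P (⋂ n : ℕ, {ω | Y 1 ω ≤ 1 / ((n : ℝ) + 1)}))) := by
      apply tendsto_measure_iInter_atTop
      · exact fun n => (measurableSet_le (hYm 1) measurable_const).nullMeasurableSet
      · intro n n' hnn' ω hω
        simp only [Set.mem_setOf_eq] at hω ⊢
        refine le_trans hω ?_
        have hc : ((n : ℝ) + 1) ≤ (n' : ℝ) + 1 := by
          have : (n : ℝ) ≤ (n' : ℝ) := Nat.cast_le.mpr hnn'
          linarith
        exact one_div_le_one_div_of_le (by positivity) hc
      · exact ⟨0, measure_ne_top P _⟩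
    have hempty : (⋂ n : ℕ, {ω | Y 1 ω ≤ 1 / ((n : ℝ) + 1)}) = ∅ := by
      ext ω
      simp only [Set.mem_iInter, Set.mem_setOf_eq, Set.mem_empty_iff_false, iff_false, not_forall,
        not_le]
      obtain ⟨n, hn⟩ := exists_nat_one_div_lt (hYpos 1 ω)
      exact ⟨n, hn⟩
    rw [hempty] at hseqlim
    simp only [measure_empty] at hseqlim
    have hle : P (⋂ N, {ω | W N ω < v}) ≤ 0 :=
      ge_of_tendsto' hseqlim fun n => key _ (by positivity)
    exact le_antisymm hle zero_le
  -- STEP II' : stationarity rewrite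
  have hstatA : ∀ (m n : ℕ), 1 ≤ n → ∀ v : ℝ,
      P (A m v) = P {ω | (∑ j ∈ Finset.Ioc n (n + m), Y j ω) < v ∧
        v ≤ (∑ j ∈ Finset.Ioc n (n + m), Y j ω) + Y n ω} := by
    intro m n hn v
    set S : Set (ℕ → ℝ) :=
      {z | (∑ k ∈ Finset.Ioc 0 m, z k) < v ∧ v ≤ (∑ k ∈ Finset.Ioc 0 m, z k) + z 0} with hSdef
    have hsummeas : Measurable fun z : ℕ → ℝ => ∑ k ∈ Finset.Ioc 0 m, z k :=
      Finset.measurable_sum _ fun k _ => measurable_pi_apply k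
    have hSmeas : MeasurableSet S :=
      (measurableSet_lt hsummeas measurable_const).inter
        (measurableSet_le measurable_const (hsummeas.add (measurable_pi_apply 0)))
    have e1 : seq 1 ⁻¹' S = A m v := by
      ext ω
      simp only [Set.mem_preimage, hSdef, Set.mem_setOf_eq, hAdef, (show (∑ k ∈ Finset.Ioc 0 m, Y (1 + k) ω) = _ from hshift 1 m ω),
        hTIoc m ω, hseqdef, Nat.add_zero]
    have e2 : seq n ⁻¹' S = {ω | (∑ j ∈ Finset.Ioc n (n + m), Y j ω) < v ∧
        v ≤ (∑ j ∈ Finset.Ioc n (n + m), Y j ω) + Y n ω} := by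
      ext ω
      simp only [Set.mem_preimage, hSdef, Set.mem_setOf_eq, (show (∑ k ∈ Finset.Ioc 0 m, Y (n + k) ω) = _ from hshift n m ω), hseqdef, Nat.add_zero]
    rw [← e1, ← e2, ← Measure.map_apply (hseqmeas 1) hSmeas,
      ← Measure.map_apply (hseqmeas n) hSmeas]
    have h1 : Measure.map (seq n) P = Measure.map (seq 1) P := hstat n hn
    rw [h1]
  -- STEP II'' : finite telescoping identity
  have hpartial : ∀ (v : ℝ), 0 < v → ∀ N : ℕ,
      (∑ m ∈ Finset.range N, P (A m v)) = P {ω | v ≤ W N ω} := by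
    intro v hv N
    set R : ℕ → Ω → ℝ := fun i ω => ∑ j ∈ Finset.Ioc i N, Y j ω with hRdef
    have hRmeas : ∀ i, Measurable (R i) := fun i => Finset.measurable_sum _ fun j _ => hYm j
    have hRmono : ∀ i i', i ≤ i' → ∀ ω, R i' ω ≤ R i ω := by
      intro i i' hii' ω
      exact Finset.sum_le_sum_of_subset_of_nonneg (Finset.Ioc_subset_Ioc_left hii')
        (fun j _ _ => (hYpos j ω).le)
    have hRsucc : ∀ i, 1 ≤ i → i ≤ N → ∀ ω, R (i - 1) ω = Y i ω + R i ω := by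
      intro i h1 h2 ω
      simp only [hRdef]
      rw [← Finset.sum_Ioc_consecutive (fun j => Y j ω) (show i - 1 ≤ i by omega) h2]
      congr 1
      have : Finset.Ioc (i - 1) i = {i} := by
        have := Nat.Ioc_succ_singleton (b := i - 1)
        rwa [show i - 1 + 1 = i by omega] at this
      rw [this, Finset.sum_singleton]
    set ES : ℕ → Set Ω := fun i => {ω | R i ω < v ∧ v ≤ R (i - 1) ω} with hESdef
    have hESmeas : ∀ i, MeasurableSet (ES i) := fun i =>
      (measurableSet_lt (hRmeas i) measurable_const).inter
        (measurableSet_le measurable_const (hRmeas (i - 1)))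
    have hterm : ∀ m, m < N → P (A m v) = P (ES (N - m)) := by
      intro m hm
      rw [hstatA m (N - m) (by omega) v]
      congr 1
      ext ω
      have hNm : N - m + m = N := by omega
      rw [hNm]
      simp only [hESdef, Set.mem_setOf_eq]
      have hre : (∑ j ∈ Finset.Ioc (N - m) N, Y j ω) = R (N - m) ω := rfl
      rw [hre, hRsucc (N - m) (by omega) (by omega) ω]
      constructor
      · rintro ⟨ha, hb⟩
        exact ⟨ha, by linarith⟩
      · rintro ⟨ha, hb⟩
        exact ⟨ha, by linarith⟩
    have hdisj : (↑(Finset.Icc 1 N) : Set ℕ).PairwiseDisjoint ES := by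
      have haux : ∀ i i', 1 ≤ i → i < i' → Disjoint (ES i) (ES i') := by
        intro i i' h1 h2
        rw [Set.disjoint_left]
        rintro ω ⟨ha, _⟩ ⟨_, hd⟩
        have : R (i' - 1) ω ≤ R i ω := hRmono i (i' - 1) (by omega) ω
        linarith
      intro i hi i' hi' hne
      simp only [Finset.coe_Icc, Set.mem_Icc] at hi hi'
      rcases lt_or_gt_of_ne hne with hlt | hgt
      · exact haux i i' hi.1 hlt
      · exact (haux i' i hi'.1 hgt).symm
    have hunion : (⋃ i ∈ Finset.Icc 1 N, ES i) = {ω | v ≤ W N ω} := by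
      ext ω
      simp only [Set.mem_iUnion, Finset.mem_Icc, Set.mem_setOf_eq, hESdef]
      constructor
      · rintro ⟨i, ⟨h1, h2⟩, _, hb⟩
        exact le_trans hb (hRmono 0 (i - 1) (by omega) ω)
      · intro hω
        have hRN : R N ω = 0 := by
          simp [hRdef]
        have hWR : W N ω = R 0 ω := rfl
        obtain ⟨i, hi1, hiN, hilt, hige⟩ :=
          stmt13_bracket (u := fun i => R i ω) N (hWR ▸ hω) (by show R N ω < v; rw [hRN]; exact hv)
        exact ⟨i, ⟨hi1, hiN⟩, hilt, hige⟩
    calc (∑ m ∈ Finset.range N, P (A m v))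
        = ∑ m ∈ Finset.range N, P (ES (N - m)) :=
          Finset.sum_congr rfl fun m hm => hterm m (Finset.mem_range.mp hm)
      _ = ∑ i ∈ Finset.Icc 1 N, P (ES i) := by
          apply Finset.sum_nbij' (i := fun m => N - m) (j := fun i => N - i)
          · intro m hm
            simp only [Finset.mem_range] at hm
            simp only [Finset.mem_Icc]
            omega
          · intro i hi
            simp only [Finset.mem_Icc] at hi
            simp only [Finset.mem_range]
            omega
          · intro m hm
            simp only [Finset.mem_range] at hm
            omega
          · intro i hi
            simp only [Finset.mem_Icc] at hi
            omega
          · intro m hm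
            rfl
      _ = P (⋃ i ∈ Finset.Icc 1 N, ES i) :=
          (measure_biUnion_finset hdisj fun i _ => hESmeas i).symm
      _ = P {ω | v ≤ W N ω} := by rw [hunion]
  -- STEP II : total mass identity
  have key2 : ∀ v : ℝ, 0 < v → (∑' m, P (A m v)) = 1 := by
    intro v hv
    rw [ENNReal.tsum_eq_iSup_nat]
    have h1 : ∀ N, (∑ m ∈ Finset.range N, P (A m v)) = P {ω | v ≤ W N ω} := hpartial v hv
    simp_rw [h1]
    have hmonoW : Monotone (fun N => {ω | v ≤ W N ω}) := by
      intro N N' hNN' ω hω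
      simp only [Set.mem_setOf_eq] at hω ⊢
      refine le_trans hω ?_
      exact Finset.sum_le_sum_of_subset_of_nonneg
        (Finset.Ioc_subset_Ioc_right hNN') (fun j _ _ => (hYpos j ω).le)
    rw [← hmonoW.measure_iUnion]
    have hc : (⋃ N, {ω | v ≤ W N ω}) = (⋂ N, {ω | W N ω < v})ᶜ := by
      simp only [Set.compl_iInter, Set.compl_setOf, not_lt]
    rw [hc, measure_compl (MeasurableSet.iInter fun N =>
      measurableSet_lt (hWmeas N) measurable_const) (measure_ne_top P _), hdiv v hv]
    simp
  -- The ENNReal-valued inner integral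
  set g : Ω → ℝ → ENNReal := fun ω u => ∑' m, ENNReal.ofReal (h' (u + T m ω)) with hgdef
  have hgmeas : Measurable (fun p : Ω × ℝ => g p.1 p.2) := by
    apply Measurable.ennreal_tsum
    intro m
    exact ENNReal.measurable_ofReal.comp
      (h'meas.comp (measurable_snd.add ((hTmeas m).comp measurable_fst)))
  set H : Ω → ENNReal := fun ω => ∫⁻ u in Set.Ioc 0 (Y 1 ω), g ω u with hHdef
  have hSS : MeasurableSet {p : Ω × ℝ | 0 < p.2 ∧ p.2 ≤ Y 1 p.1} :=
    (measurableSet_lt measurable_const measurable_snd).inter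
      (measurableSet_le measurable_snd ((hYm 1).comp measurable_fst))
  have hHrepr : ∀ ω, H ω = ∫⁻ u, ({p : Ω × ℝ | 0 < p.2 ∧ p.2 ≤ Y 1 p.1}.indicator
      (fun p : Ω × ℝ => g p.1 p.2)) (ω, u) := by
    intro ω
    show (∫⁻ u in Set.Ioc 0 (Y 1 ω), g ω u) = _
    rw [← lintegral_indicator measurableSet_Ioc]
    apply lintegral_congr
    intro u
    by_cases hu : u ∈ Set.Ioc 0 (Y 1 ω)
    · rw [Set.indicator_of_mem hu, Set.indicator_of_mem
        (show (ω, u) ∈ {p : Ω × ℝ | 0 < p.2 ∧ p.2 ≤ Y 1 p.1} from ⟨hu.1, hu.2⟩)]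
    · rw [Set.indicator_of_notMem hu, Set.indicator_of_notMem (by
        simpa [Set.mem_Ioc] using hu)]
  have hHmeas : Measurable H := by
    have hF : Measurable ({p : Ω × ℝ | 0 < p.2 ∧ p.2 ≤ Y 1 p.1}.indicator
        (fun p : Ω × ℝ => g p.1 p.2)) := hgmeas.indicator hSS
    have := Measurable.lintegral_prod_right' (ν := volume) hF
    convert this using 1
    funext ω
    exact hHrepr ω
  -- STEP I : total expected intensity contribution
  set F : ℕ → Ω × ℝ → ENNReal := fun m p =>
    Set.indicator {q : Ω × ℝ | T m q.1 < q.2 ∧ q.2 ≤ T m q.1 + Y 1 q.1}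
      (fun q => ENNReal.ofReal (h' q.2)) p with hFdef
  have hFmeasSet : ∀ m, MeasurableSet {q : Ω × ℝ | T m q.1 < q.2 ∧ q.2 ≤ T m q.1 + Y 1 q.1} :=
    fun m => (measurableSet_lt ((hTmeas m).comp measurable_fst) measurable_snd).inter
      (measurableSet_le measurable_snd (((hTmeas m).comp measurable_fst).add
        ((hYm 1).comp measurable_fst)))
  have hFmeas : ∀ m, Measurable (F m) := fun m =>
    (ENNReal.measurable_ofReal.comp (h'meas.comp measurable_snd)).indicator (hFmeasSet m)
  have hIm : ∀ m ω, (∫⁻ u in Set.Ioc 0 (Y 1 ω), ENNReal.ofReal (h' (u + T m ω)))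
      = ∫⁻ v, F m (ω, v) := by
    intro m ω
    have htr := (measurePreserving_add_right volume (T m ω)).setLIntegral_comp_emb
      (MeasurableEquiv.addRight (T m ω)).measurableEmbedding
      (fun v => ENNReal.ofReal (h' v)) (Set.Ioc 0 (Y 1 ω))
    have himg : (fun u : ℝ => u + T m ω) '' Set.Ioc 0 (Y 1 ω)
        = Set.Ioc (T m ω) (T m ω + Y 1 ω) := by
      rw [Set.image_add_const_Ioc, zero_add, add_comm (Y 1 ω) (T m ω)]
    rw [htr, himg, ← lintegral_indicator measurableSet_Ioc]
    apply lintegral_congr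
    intro v
    show _ = Set.indicator {q : Ω × ℝ | T m q.1 < q.2 ∧ q.2 ≤ T m q.1 + Y 1 q.1}
      (fun q => ENNReal.ofReal (h' q.2)) (ω, v)
    by_cases hv : v ∈ Set.Ioc (T m ω) (T m ω + Y 1 ω)
    · rw [Set.indicator_of_mem hv, Set.indicator_of_mem
        (show ((ω, v) : Ω × ℝ) ∈ {q : Ω × ℝ | T m q.1 < q.2 ∧ q.2 ≤ T m q.1 + Y 1 q.1} from
          ⟨hv.1, hv.2⟩)]
    · rw [Set.indicator_of_notMem hv, Set.indicator_of_notMem (by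
        simpa [Set.mem_Ioc] using hv)]
  have hHsum : ∀ ω, H ω = ∫⁻ v, ∑' m, F m (ω, v) := by
    intro ω
    rw [hHdef]
    calc (∫⁻ u in Set.Ioc 0 (Y 1 ω), g ω u)
        = ∑' m, ∫⁻ u in Set.Ioc 0 (Y 1 ω), ENNReal.ofReal (h' (u + T m ω)) := by
          exact lintegral_tsum fun m => (ENNReal.measurable_ofReal.comp
            (h'meas.comp (measurable_id.add measurable_const))).aemeasurable
      _ = ∑' m, ∫⁻ v, F m (ω, v) := by
          exact tsum_congr fun m => hIm m ω
      _ = ∫⁻ v, ∑' m, F m (ω, v) := by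
          exact (lintegral_tsum fun m =>
            ((hFmeas m).comp measurable_prodMk_left).aemeasurable).symm
  -- STEP I : total expected intensity contribution
  have keyI : ∫⁻ ω, H ω ∂P = ENNReal.ofReal α := by
    have hswap : ∫⁻ ω, ∫⁻ v, (∑' m, F m (ω, v)) ∂volume ∂P
        = ∫⁻ v, ∫⁻ ω, (∑' m, F m (ω, v)) ∂P ∂volume := by
      apply lintegral_lintegral_swap
      exact (Measurable.ennreal_tsum fun m => hFmeas m).aemeasurable
    have hinner : ∀ v : ℝ, (∫⁻ ω, (∑' m, F m (ω, v)) ∂P)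
        = Set.indicator (Set.Ioi 0) (fun v => ENNReal.ofReal (h v)) v := by
      intro v
      have h1 : (∫⁻ ω, (∑' m, F m (ω, v)) ∂P) = ∑' m, ∫⁻ ω, F m (ω, v) ∂P :=
        lintegral_tsum fun m => ((hFmeas m).comp measurable_prodMk_right).aemeasurable
      have h2 : ∀ m, (∫⁻ ω, F m (ω, v) ∂P) = ENNReal.ofReal (h' v) * P (A m v) := by
        intro m
        have : (fun ω => F m (ω, v)) = (A m v).indicator (fun _ => ENNReal.ofReal (h' v)) := by
          funext ω
          show Set.indicator {q : Ω × ℝ | T m q.1 < q.2 ∧ q.2 ≤ T m q.1 + Y 1 q.1}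
            (fun q => ENNReal.ofReal (h' q.2)) (ω, v) = _
          by_cases hω : ω ∈ A m v
          · simp only [hAdef, Set.mem_setOf_eq] at hω
            rw [Set.indicator_of_mem
              (show ((ω, v) : Ω × ℝ) ∈ {q : Ω × ℝ | T m q.1 < q.2 ∧ q.2 ≤ T m q.1 + Y 1 q.1} from
                ⟨hω.1, hω.2⟩),
              Set.indicator_of_mem (show ω ∈ A m v from hω)]
          · simp only [hAdef, Set.mem_setOf_eq, not_and, not_le] at hω
            rw [Set.indicator_of_notMem (show ((ω, v) : Ω × ℝ) ∉ _ by
                intro hc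
                exact absurd hc.2 (not_le.mpr (hω hc.1))),
              Set.indicator_of_notMem (show ω ∉ A m v by
                intro hc
                simp only [hAdef, Set.mem_setOf_eq] at hc
                exact absurd hc.2 (not_le.mpr (hω hc.1)))]
        rw [this, lintegral_indicator_const (hAmeas m v)]
      rw [h1]
      simp_rw [h2]
      rw [ENNReal.tsum_mul_left]
      by_cases hv : 0 < v
      · rw [key2 v hv, mul_one, Set.indicator_of_mem (Set.mem_Ioi.mpr hv), h'eq v hv.le]
      · have hA0 : ∀ m, A m v = ∅ := by
          intro m
          ext ω
          simp only [hAdef, Set.mem_setOf_eq, Set.mem_empty_iff_false, iff_false, not_and, not_le]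
          intro hlt
          push_neg at hv
          linarith [hTnonneg m ω]
        simp only [hA0, measure_empty, tsum_zero, mul_zero]
        rw [Set.indicator_of_notMem (by simpa using hv)]
    calc ∫⁻ ω, H ω ∂P = ∫⁻ ω, ∫⁻ v, (∑' m, F m (ω, v)) ∂volume ∂P := by
          apply lintegral_congr
          intro ω
          exact hHsum ω
      _ = ∫⁻ v, ∫⁻ ω, (∑' m, F m (ω, v)) ∂P ∂volume := hswap
      _ = ∫⁻ v, Set.indicator (Set.Ioi 0) (fun v => ENNReal.ofReal (h v)) v := by
          apply lintegral_congr
          intro v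
          exact hinner v
      _ = ∫⁻ v in Set.Ioi 0, ENNReal.ofReal (h v) := lintegral_indicator measurableSet_Ioi _
      _ = ENNReal.ofReal α := by
          rw [← ofReal_integral_eq_lintegral_ofReal hint
            ((ae_restrict_iff' measurableSet_Ioi).2 (ae_of_all _ fun v hv => hpos v hv.le)), hα]
  -- STEP V : conclusion
  set Z : Ω → ℝ := fun ω => ∫ u in Set.Ioc 0 (Y 1 ω),
      (ν + β * ∑' m : ℕ, h (u + T m ω)) with hZdef
  have hZexp : ∀ t : ℝ, 0 ≤ t → P {ω | Z ω ≤ t} = ENNReal.ofReal (1 - Real.exp (-t)) := by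
    intro t ht
    exact hexp 1 le_rfl t ht
  have hZnonneg : ∀ ω, 0 ≤ Z ω := fun ω =>
    setIntegral_nonneg measurableSet_Ioc fun u hu =>
      add_nonneg hν.le (mul_nonneg hβ.le (tsum_nonneg fun m =>
        hpos _ (add_nonneg hu.1.le (hTnonneg m ω))))
  have hHfin : ∀ᵐ ω ∂P, H ω < ⊤ := by
    apply ae_lt_top hHmeas
    rw [keyI]
    exact ENNReal.ofReal_ne_top
  have hZeq : ∀ᵐ ω ∂P, Z ω = ν * Y 1 ω + β * (H ω).toReal := by
    filter_upwards [hHfin] with ω hfin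
    have hgm : Measurable (g ω) := hgmeas.comp measurable_prodMk_left
    have hfinne : (∫⁻ u in Set.Ioc 0 (Y 1 ω), g ω u) ≠ ⊤ := hfin.ne
    have hgfin : ∀ᵐ u ∂(volume.restrict (Set.Ioc 0 (Y 1 ω))), g ω u < ⊤ :=
      ae_lt_top hgm hfinne
    have haeeq : ∀ᵐ u ∂(volume.restrict (Set.Ioc 0 (Y 1 ω))),
        (ν + β * ∑' m : ℕ, h (u + T m ω)) = ν + β * (g ω u).toReal := by
      filter_upwards [hgfin, ae_restrict_mem measurableSet_Ioc] with u hufin humem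
      have h1 : (g ω u).toReal = ∑' m, (ENNReal.ofReal (h' (u + T m ω))).toReal :=
        ENNReal.tsum_toReal_eq fun m => ENNReal.ofReal_ne_top
      have h2 : ∀ m : ℕ, (ENNReal.ofReal (h' (u + T m ω))).toReal = h (u + T m ω) := fun m => by
        rw [ENNReal.toReal_ofReal (h'nonneg _), h'eq _ (add_nonneg humem.1.le (hTnonneg m ω))]
      rw [h1]
      congr 2
      exact (tsum_congr h2).symm
    have hInt2 : IntegrableOn (fun u => (g ω u).toReal) (Set.Ioc 0 (Y 1 ω)) volume :=
      integrable_toReal_of_lintegral_ne_top hgm.aemeasurable hfinne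
    have hIntc : IntegrableOn (fun _ : ℝ => ν) (Set.Ioc 0 (Y 1 ω)) volume := by
      exact integrableOn_const (by rw [Real.volume_Ioc]; exact ENNReal.ofReal_ne_top)
    calc Z ω = ∫ u in Set.Ioc 0 (Y 1 ω), (ν + β * (g ω u).toReal) :=
          integral_congr_ae haeeq
      _ = (∫ _ in Set.Ioc 0 (Y 1 ω), ν) + ∫ u in Set.Ioc 0 (Y 1 ω), β * (g ω u).toReal :=
          integral_add hIntc (hInt2.const_mul β)
      _ = ν * Y 1 ω + β * (H ω).toReal := by
          rw [setIntegral_const, integral_const_mul, measureReal_def, Real.volume_Ioc,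
            integral_toReal hgm.aemeasurable hgfin]
          rw [sub_zero, ENNReal.toReal_ofReal (hYpos 1 ω).le, smul_eq_mul, mul_comm (Y 1 ω) ν]
  have hZmeasae : AEMeasurable Z P := by
    have hm : Measurable (fun ω => ν * Y 1 ω + β * (H ω).toReal) :=
      ((hYm 1).const_mul ν).add (hHmeas.ennreal_toReal.const_mul β)
    exact (aemeasurable_congr hZeq).mpr hm.aemeasurable
  have hlayer : ∫⁻ ω, ENNReal.ofReal (Z ω) ∂P = 1 := by
    rw [lintegral_eq_lintegral_meas_lt P (ae_of_all _ hZnonneg) hZmeasae]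
    have hmeaseq : ∀ t : ℝ, t ∈ Set.Ioi (0:ℝ) →
        P {a | t < Z a} = ENNReal.ofReal (Real.exp (-t)) := by
      intro t ht
      have hc : {a | t < Z a} = {a | Z a ≤ t}ᶜ := by
        ext a
        simp [not_le]
      have hns : NullMeasurableSet {a | Z a ≤ t} P := hZmeasae.nullMeasurable measurableSet_Iic
      rw [hc, measure_compl₀ hns (measure_ne_top P _), hZexp t (le_of_lt ht), measure_univ]
      have hexple : Real.exp (-t) ≤ 1 := Real.exp_le_one_iff.mpr (by linarith [Set.mem_Ioi.mp ht])
      rw [← ENNReal.ofReal_one, ← ENNReal.ofReal_sub 1 (by linarith)]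
      norm_num
    rw [setLIntegral_congr_fun measurableSet_Ioi hmeaseq]
    have hintexp : IntegrableOn (fun t : ℝ => Real.exp (-t)) (Set.Ioi 0) volume := by
      have := exp_neg_integrableOn_Ioi 0 (b := 1) one_pos
      simpa using this
    rw [← ofReal_integral_eq_lintegral_ofReal hintexp
      (ae_of_all _ fun t => (Real.exp_pos (-t)).le), integral_exp_neg_Ioi_zero,
      ENNReal.ofReal_one]
  have hEYnn : 0 ≤ ∫ ω, Y 1 ω ∂P := integral_nonneg fun ω => (hYpos 1 ω).le
  have hαnn : 0 ≤ α := by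
    rw [hα]
    exact setIntegral_nonneg measurableSet_Ioi fun s hs => hpos s (le_of_lt hs)
  have hmain : ENNReal.ofReal (ν * (∫ ω, Y 1 ω ∂P) + β * α) = 1 := by
    calc ENNReal.ofReal (ν * (∫ ω, Y 1 ω ∂P) + β * α)
        = ENNReal.ofReal (ν * ∫ ω, Y 1 ω ∂P) + ENNReal.ofReal (β * α) :=
          ENNReal.ofReal_add (mul_nonneg hν.le hEYnn) (mul_nonneg hβ.le hαnn)
      _ = ENNReal.ofReal ν * ENNReal.ofReal (∫ ω, Y 1 ω ∂P)
            + ENNReal.ofReal β * ENNReal.ofReal α := by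
          rw [ENNReal.ofReal_mul hν.le, ENNReal.ofReal_mul hβ.le]
      _ = ENNReal.ofReal ν * (∫⁻ ω, ENNReal.ofReal (Y 1 ω) ∂P)
            + ENNReal.ofReal β * ∫⁻ ω, H ω ∂P := by
          rw [ofReal_integral_eq_lintegral_ofReal (hYint 1)
            (ae_of_all _ fun ω => (hYpos 1 ω).le), keyI]
      _ = ∫⁻ ω, (ENNReal.ofReal ν * ENNReal.ofReal (Y 1 ω) + ENNReal.ofReal β * H ω) ∂P := by
          rw [lintegral_add_left (((hYm 1).ennreal_ofReal).const_mul _),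
            lintegral_const_mul _ ((hYm 1).ennreal_ofReal), lintegral_const_mul _ hHmeas]
      _ = ∫⁻ ω, ENNReal.ofReal (Z ω) ∂P := by
          apply lintegral_congr_ae
          filter_upwards [hZeq, hHfin] with ω heq hfin
          rw [heq, ENNReal.ofReal_add (mul_nonneg hν.le (hYpos 1 ω).le)
            (mul_nonneg hβ.le ENNReal.toReal_nonneg), ENNReal.ofReal_mul hν.le,
            ENNReal.ofReal_mul hβ.le, ENNReal.ofReal_toReal hfin.ne]
      _ = 1 := hlayer
  have hreal : ν * (∫ ω, Y 1 ω ∂P) + β * α = 1 := by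
    have h1 := congrArg ENNReal.toReal hmain
    rwa [ENNReal.toReal_ofReal (by positivity), ENNReal.toReal_one] at h1
  rw [eq_div_iff hν.ne']
  linarith
end

section
/- In the exponential-memory chain with Φ(u) = (ν + βu)^γ, γ > 1, the drift satisfies: E_{z₀}(Z₁ - z₀) → 1 as z₀ → ∞ and sup_{z₀ ≥ 1} E_{z₀}((Z₁ - z₀)²) < ∞, where Z₁ is defined from z₀ by E₁ = α ∫_{Z₁-1}^{z₀} Φ(u)/u du with E₁ exponential(1). -/
open MeasureTheory Filter Set Real
open scoped ENNReal NNReal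

lemma key_bound (α β ν γ : ℝ) (hα : 0 < α) (hβ : 0 < β) (hν : 0 < ν) (hγ : 1 < γ)
    (z₀ : ℝ) (hz₀ : 1 ≤ z₀) (Z e : ℝ) (hZ1 : 1 < Z) (hZ2 : Z ≤ z₀ + 1)
    (hint : α * ∫ u in Set.Ioc (Z - 1) z₀, (ν + β * u) ^ γ / u = e) :
    z₀ + 1 - Z ≤ (2 ^ γ / (α * β ^ γ)) * e * z₀ ^ (1 - γ) := by
  set a : ℝ := Z - 1 with ha_def
  clear_value a
  have ha : 0 < a := by simp only [ha_def]; linarith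
  have haz : a ≤ z₀ := by simp only [ha_def]; linarith
  have hz₀0 : (0:ℝ) < z₀ := by linarith
  set f : ℝ → ℝ := fun u => (ν + β * u) ^ γ / u with hf_def
  have hcont : ContinuousOn f (Icc a z₀) := by
    apply ContinuousOn.div
    · apply ContinuousOn.rpow_const
      · exact (continuous_const.add (continuous_const.mul continuous_id)).continuousOn
      · intro x hx
        left
        have : 0 < x := lt_of_lt_of_le ha hx.1
        positivity
    · exact continuousOn_id
    · intro x hx; exact ne_of_gt (lt_of_lt_of_le ha hx.1)
  have hInt : IntegrableOn f (Ioc a z₀) := (hcont.integrableOn_Icc).mono_set Ioc_subset_Icc_self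
  have hnn : ∀ u ∈ Ioc a z₀, 0 ≤ f u := by
    intro u hu
    have hu0 : 0 < u := lt_of_le_of_lt ha.le hu.1
    have : (0:ℝ) ≤ (ν + β * u) ^ γ := by positivity
    positivity
  have helper : ∀ s : ℝ, a ≤ s → 0 < s → s ≤ z₀ →
      β ^ γ * s ^ (γ - 1) * (z₀ - s) ≤ ∫ u in Ioc a z₀, f u := by
    intro s has hs0 hsz
    have hsub : Ioc s z₀ ⊆ Ioc a z₀ := Ioc_subset_Ioc_left has
    have h1 : ∫ u in Ioc s z₀, f u ≤ ∫ u in Ioc a z₀, f u := by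
      refine setIntegral_mono_set hInt ?_ (HasSubset.Subset.eventuallyLE hsub)
      exact (ae_restrict_iff' measurableSet_Ioc).mpr (Filter.Eventually.of_forall hnn)
    have h2 : (β ^ γ * s ^ (γ - 1)) * ((volume (Ioc s z₀)).toReal) ≤ ∫ u in Ioc s z₀, f u := by
      apply setIntegral_ge_of_const_le_real (μ := volume) measurableSet_Ioc (by simp [Real.volume_Ioc])
      · intro x hx
        have hx0 : 0 < x := lt_trans hs0 hx.1
        have hb1 : s ^ (γ - 1) ≤ x ^ (γ - 1) :=
          Real.rpow_le_rpow hs0.le hx.1.le (by linarith)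
        have hb2 : β ^ γ * x ^ (γ - 1) = (β * x) ^ γ / x := by
          rw [Real.mul_rpow hβ.le hx0.le, Real.rpow_sub hx0, Real.rpow_one]
          ring
        have hb3 : (β * x) ^ γ ≤ (ν + β * x) ^ γ :=
          Real.rpow_le_rpow (by positivity) (by linarith) (by linarith)
        have hβγ : (0:ℝ) ≤ β ^ γ := (Real.rpow_pos_of_pos hβ γ).le
        calc β ^ γ * s ^ (γ - 1) ≤ β ^ γ * x ^ (γ - 1) := by nlinarith
          _ = (β * x) ^ γ / x := hb2
          _ ≤ (ν + β * x) ^ γ / x := by gcongr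
          _ = f x := rfl
      · exact hInt.mono_set hsub
    have hvol : (volume (Ioc s z₀)).toReal = z₀ - s := by
      rw [Real.volume_Ioc, ENNReal.toReal_ofReal (by linarith)]
    rw [hvol] at h2
    linarith
  have he : ∀ s : ℝ, a ≤ s → 0 < s → s ≤ z₀ →
      α * (β ^ γ * s ^ (γ - 1) * (z₀ - s)) ≤ e := by
    intro s has hs0 hsz
    rw [← hint]
    exact mul_le_mul_of_nonneg_left (helper s has hs0 hsz) hα.le
  have hβγ : (0:ℝ) < β ^ γ := Real.rpow_pos_of_pos hβ γ
  have he0 : 0 ≤ e := by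
    have h := he a le_rfl ha haz
    have h0 : 0 ≤ α * (β ^ γ * a ^ (γ - 1) * (z₀ - a)) :=
      mul_nonneg hα.le (mul_nonneg (mul_nonneg hβγ.le (Real.rpow_pos_of_pos ha _).le)
        (by linarith))
    linarith
  have hA : (0:ℝ) < z₀ ^ (γ - 1) := Real.rpow_pos_of_pos hz₀0 _
  have hB : (0:ℝ) < (2:ℝ) ^ (γ - 1) := Real.rpow_pos_of_pos two_pos _
  have h2γ : (2:ℝ) ^ γ = 2 * 2 ^ (γ - 1) := by
    rw [← Real.rpow_one_add' (by norm_num) (by intro h; linarith)]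
    ring_nf
  have hz1γ : z₀ ^ (1 - γ) = (z₀ ^ (γ - 1))⁻¹ := by
    rw [← Real.rpow_neg hz₀0.le]; ring_nf
  have hz1γ0 : (0:ℝ) < z₀ ^ (1 - γ) := Real.rpow_pos_of_pos hz₀0 _
  have hhalf : (z₀ / 2) ^ (γ - 1) = z₀ ^ (γ - 1) / 2 ^ (γ - 1) :=
    Real.div_rpow hz₀0.le (by norm_num) _
  have hW : z₀ + 1 - Z = z₀ - a := by rw [ha_def]; ring
  rw [hW]
  by_cases hcase : z₀ / 2 ≤ a
  · have h := he a le_rfl ha haz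
    have hmono : (z₀ / 2) ^ (γ - 1) ≤ a ^ (γ - 1) :=
      Real.rpow_le_rpow (by linarith) hcase (by linarith)
    have hza : 0 ≤ z₀ - a := by linarith
    have h2 : α * (β ^ γ * ((z₀ / 2) ^ (γ - 1)) * (z₀ - a)) ≤ e := by
      have t1 : (z₀ / 2) ^ (γ - 1) * (z₀ - a) ≤ a ^ (γ - 1) * (z₀ - a) :=
        mul_le_mul_of_nonneg_right hmono hza
      have t2 := mul_le_mul_of_nonneg_left t1 (mul_nonneg hα.le hβγ.le)
      linarith
    rw [hhalf] at h2
    have h3 : α * β ^ γ * (z₀ - a) * (z₀ ^ (γ - 1)) ≤ e * 2 ^ (γ - 1) := by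
      have h4 := mul_le_mul_of_nonneg_right h2 hB.le
      have h5 : α * (β ^ γ * (z₀ ^ (γ - 1) / 2 ^ (γ - 1)) * (z₀ - a)) * 2 ^ (γ - 1)
          = α * β ^ γ * (z₀ - a) * (z₀ ^ (γ - 1)) := by
        field_simp
      rw [h5] at h4
      linarith
    have hRHS : 2 ^ γ / (α * β ^ γ) * e * z₀ ^ (1 - γ)
        = (2 * 2 ^ (γ - 1) * e) / ((α * β ^ γ) * z₀ ^ (γ - 1)) := by
      rw [h2γ, hz1γ]; field_simp
    rw [hRHS, le_div_iff₀ (by positivity)]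
    nlinarith [mul_nonneg hB.le he0]
  · push_neg at hcase
    have h := he (z₀ / 2) (le_of_lt hcase) (by linarith) (by linarith)
    have hpow : (z₀ / 2) ^ (γ - 1) * (z₀ / 2) = (z₀ / 2) ^ γ := by
      nth_rewrite 2 [show z₀ / 2 = (z₀ / 2) ^ (1:ℝ) from (Real.rpow_one _).symm]
      rw [← Real.rpow_add (by linarith)]
      ring_nf
    have h2 : α * (β ^ γ * (z₀ / 2) ^ γ) ≤ e := by
      have hq : z₀ - z₀ / 2 = z₀ / 2 := by ring
      rw [hq] at h
      have h2' : α * (β ^ γ * ((z₀ / 2) ^ (γ - 1) * (z₀ / 2))) ≤ e := by linarith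
      rw [hpow] at h2'
      exact h2'
    have hdiv : (z₀ / 2) ^ γ = z₀ ^ γ / 2 ^ γ := Real.div_rpow hz₀0.le (by norm_num) _
    rw [hdiv] at h2
    have h2γ0 : (0:ℝ) < (2:ℝ) ^ γ := Real.rpow_pos_of_pos two_pos _
    have hzγ : α * β ^ γ * z₀ ^ γ ≤ 2 ^ γ * e := by
      have h4 := mul_le_mul_of_nonneg_left h2 h2γ0.le
      have h5 : (2:ℝ) ^ γ * (α * (β ^ γ * (z₀ ^ γ / 2 ^ γ))) = α * β ^ γ * z₀ ^ γ := by
        field_simp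
      rw [h5] at h4
      linarith
    have hsplit : z₀ = z₀ ^ γ * z₀ ^ (1 - γ) := by
      rw [← Real.rpow_add hz₀0]
      norm_num
    have key : z₀ ≤ 2 ^ γ / (α * β ^ γ) * e * z₀ ^ (1 - γ) := by
      have hzg : z₀ ^ γ ≤ 2 ^ γ / (α * β ^ γ) * e := by
        rw [div_mul_eq_mul_div, le_div_iff₀ (by positivity)]
        linarith
      calc z₀ = z₀ ^ γ * z₀ ^ (1 - γ) := hsplit
        _ ≤ (2 ^ γ / (α * β ^ γ) * e) * z₀ ^ (1 - γ) :=
            mul_le_mul_of_nonneg_right hzg hz1γ0.le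
    linarith

lemma tail_formula {Ω : Type*} [MeasurableSpace Ω] (P : Measure Ω) [IsProbabilityMeasure P]
    (E₁ : Ω → ℝ) (hE₁m : Measurable E₁)
    (hexp : ∀ t : ℝ, 0 ≤ t → P {ω | E₁ ω ≤ t} = ENNReal.ofReal (1 - Real.exp (-t)))
    (t : ℝ) (ht : 0 ≤ t) : P {ω | t < E₁ ω} = ENNReal.ofReal (Real.exp (-t)) := by
  have hms : MeasurableSet {ω | E₁ ω ≤ t} := hE₁m measurableSet_Iic
  have hcompl : {ω | t < E₁ ω} = {ω | E₁ ω ≤ t}ᶜ := by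
    ext ω; simp [not_le]
  have h1 : Real.exp (-t) ≤ 1 := Real.exp_le_one_iff.mpr (by linarith)
  rw [hcompl, measure_compl hms (measure_ne_top _ _), hexp t ht, measure_univ,
    show (1:ℝ≥0∞) = ENNReal.ofReal 1 by simp,
    ← ENNReal.ofReal_sub 1 (by linarith)]
  norm_num

lemma integrable_of_tail {Ω : Type*} [MeasurableSpace Ω] (P : Measure Ω) [IsProbabilityMeasure P]
    (g : Ω → ℝ) (hm : Measurable g) (hnn : ∀ ω, 0 ≤ g ω)
    (htail : ∀ t : ℝ, t ∈ Ioi (0:ℝ) → P {ω | t < g ω} ≤ ENNReal.ofReal (48 * (1 + t ^ 2)⁻¹)) :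
    Integrable g P := by
  refine ⟨hm.aestronglyMeasurable, ?_⟩
  rw [hasFiniteIntegral_iff_ofReal (Filter.Eventually.of_forall hnn),
    lintegral_eq_lintegral_meas_lt P (Filter.Eventually.of_forall hnn) hm.aemeasurable]
  have hint : Integrable (fun t : ℝ => 48 * (1 + t ^ 2)⁻¹) :=
    integrable_inv_one_add_sq.const_mul 48
  calc ∫⁻ t in Ioi (0:ℝ), P {ω | t < g ω}
      ≤ ∫⁻ t in Ioi (0:ℝ), ENNReal.ofReal (48 * (1 + t ^ 2)⁻¹) :=
        setLIntegral_mono' measurableSet_Ioi htail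
    _ ≤ ∫⁻ t, ENNReal.ofReal (48 * (1 + t ^ 2)⁻¹) :=
        lintegral_mono' Measure.restrict_le_self le_rfl
    _ = ENNReal.ofReal (∫ t, 48 * (1 + t ^ 2)⁻¹) :=
        (ofReal_integral_eq_lintegral_ofReal hint
          (Filter.Eventually.of_forall fun t => by positivity)).symm
    _ < ⊤ := ENNReal.ofReal_lt_top

lemma exp_bound1 (t : ℝ) (ht : 0 ≤ t) : Real.exp (-t) ≤ 48 * (1 + t ^ 2)⁻¹ := by
  rw [Real.exp_neg, inv_eq_one_div, show (48:ℝ) * (1 + t ^ 2)⁻¹ = 48 / (1 + t ^ 2) by ring,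
    div_le_div_iff₀ (Real.exp_pos t) (by positivity)]
  nlinarith [Real.quadratic_le_exp_of_nonneg ht, Real.exp_pos t]

lemma exp_bound2 (t : ℝ) (ht : 0 ≤ t) : Real.exp (-(Real.sqrt t)) ≤ 48 * (1 + t ^ 2)⁻¹ := by
  have hx : 0 ≤ Real.sqrt t := Real.sqrt_nonneg t
  have hsq : Real.sqrt t ^ 4 = t ^ 2 := by
    rw [show (4:ℕ) = 2 * 2 by norm_num, pow_mul, Real.sq_sqrt ht]
  have hs := Real.sum_le_exp_of_nonneg hx 5
  simp only [Finset.sum_range_succ, Finset.sum_range_zero] at hs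
  norm_num [Nat.factorial] at hs
  rw [Real.exp_neg, inv_eq_one_div, show (48:ℝ) * (1 + t ^ 2)⁻¹ = 48 / (1 + t ^ 2) by ring,
    div_le_div_iff₀ (Real.exp_pos _) (by positivity)]
  nlinarith [hs, hx, pow_nonneg hx 2, pow_nonneg hx 3, hsq]

/-- Drift of the exponential-memory chain with `Φ(u) = (ν + βu)^γ`, `γ > 1`: with `Z₁`
defined from `z₀` by `E₁ = α ∫_{Z₁-1}^{z₀} Φ(u)/u du`, `E₁` exponential(1), one has
`E_{z₀}(Z₁ - z₀) → 1` as `z₀ → ∞` and `sup_{z₀ ≥ 1} E_{z₀}((Z₁ - z₀)²) < ∞`. -/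
theorem stmt16 {Ω : Type*} [MeasurableSpace Ω] (P : Measure Ω) [IsProbabilityMeasure P]
    (E₁ : Ω → ℝ) (hE₁m : Measurable E₁) (hE₁pos : ∀ ω, 0 < E₁ ω)
    (hexp : ∀ t : ℝ, 0 ≤ t → P {ω | E₁ ω ≤ t} = ENNReal.ofReal (1 - Real.exp (-t)))
    (α β ν γ : ℝ) (hα : 0 < α) (hβ : 0 < β) (hν : 0 < ν) (hγ : 1 < γ)
    (Z : ℝ → Ω → ℝ) (hZm : ∀ z₀, Measurable (Z z₀))
    (hZ : ∀ z₀, 1 ≤ z₀ → ∀ ω, 1 < Z z₀ ω ∧ Z z₀ ω ≤ z₀ + 1 ∧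
      α * ∫ u in Set.Ioc (Z z₀ ω - 1) z₀, (ν + β * u) ^ γ / u = E₁ ω) :
    Tendsto (fun z₀ : ℝ => ∫ ω, (Z z₀ ω - z₀) ∂P) atTop (nhds 1) ∧
    ∃ C : ℝ, ∀ z₀ : ℝ, 1 ≤ z₀ → ∫ ω, (Z z₀ ω - z₀) ^ 2 ∂P ≤ C := by
  have tail := tail_formula P E₁ hE₁m hexp
  -- integrability of E₁ and E₁²
  have hintE : Integrable E₁ P := by
    apply integrable_of_tail P E₁ hE₁m (fun ω => (hE₁pos ω).le)
    intro t ht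
    rw [tail t (le_of_lt ht)]
    exact ENNReal.ofReal_le_ofReal (exp_bound1 t (le_of_lt ht))
  have hintE2 : Integrable (fun ω => E₁ ω ^ 2) P := by
    apply integrable_of_tail P _ (hE₁m.pow_const 2) (fun ω => sq_nonneg _)
    intro t ht
    have hset : {ω | t < E₁ ω ^ 2} = {ω | Real.sqrt t < E₁ ω} := by
      ext ω
      simp only [mem_setOf_eq]
      rw [Real.sqrt_lt' (hE₁pos ω)]
    rw [hset, tail _ (Real.sqrt_nonneg t)]
    exact ENNReal.ofReal_le_ofReal (exp_bound2 t (le_of_lt ht))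
  set C₁ : ℝ := 2 ^ γ / (α * β ^ γ) with hC₁_def
  have hC₁ : 0 < C₁ := by
    have h1 : (0:ℝ) < (2:ℝ) ^ γ := Real.rpow_pos_of_pos two_pos _
    have h2 : (0:ℝ) < β ^ γ := Real.rpow_pos_of_pos hβ _
    positivity
  clear_value C₁
  -- key pointwise bound on W = z₀ + 1 - Z
  have hWle : ∀ z₀ : ℝ, 1 ≤ z₀ → ∀ ω, z₀ + 1 - Z z₀ ω ≤ C₁ * E₁ ω * z₀ ^ (1 - γ) := by
    intro z₀ hz₀ ω
    obtain ⟨h1, h2, h3⟩ := hZ z₀ hz₀ ω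
    have := key_bound α β ν γ hα hβ hν hγ z₀ hz₀ (Z z₀ ω) (E₁ ω) h1 h2 h3
    calc z₀ + 1 - Z z₀ ω ≤ 2 ^ γ / (α * β ^ γ) * E₁ ω * z₀ ^ (1 - γ) := this
      _ = C₁ * E₁ ω * z₀ ^ (1 - γ) := by rw [hC₁_def]
  have hWnn : ∀ z₀ : ℝ, 1 ≤ z₀ → ∀ ω, 0 ≤ z₀ + 1 - Z z₀ ω := by
    intro z₀ hz₀ ω
    have := (hZ z₀ hz₀ ω).2.1
    linarith
  -- integrability of W
  have hintW : ∀ z₀ : ℝ, 1 ≤ z₀ → Integrable (fun ω => z₀ + 1 - Z z₀ ω) P := by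
    intro z₀ hz₀
    have hz₀0 : (0:ℝ) < z₀ := by linarith
    have hz1γ0 : (0:ℝ) ≤ z₀ ^ (1 - γ) := (Real.rpow_pos_of_pos hz₀0 _).le
    refine (hintE.const_mul (C₁ * z₀ ^ (1 - γ))).mono'
      ((measurable_const.sub (hZm z₀)).aestronglyMeasurable) ?_
    refine Filter.Eventually.of_forall fun ω => ?_
    rw [Real.norm_eq_abs, abs_of_nonneg (hWnn z₀ hz₀ ω)]
    calc z₀ + 1 - Z z₀ ω ≤ C₁ * E₁ ω * z₀ ^ (1 - γ) := hWle z₀ hz₀ ω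
      _ = C₁ * z₀ ^ (1 - γ) * E₁ ω := by ring
  -- the integral identity ∫ (Z - z₀) = 1 - ∫ W
  have hsplit : ∀ z₀ : ℝ, 1 ≤ z₀ →
      ∫ ω, (Z z₀ ω - z₀) ∂P = 1 - ∫ ω, (z₀ + 1 - Z z₀ ω) ∂P := by
    intro z₀ hz₀
    have heq : (fun ω => Z z₀ ω - z₀) = fun ω => (1:ℝ) - (z₀ + 1 - Z z₀ ω) := by
      ext ω; ring
    rw [heq, integral_sub (integrable_const 1) (hintW z₀ hz₀), integral_const]
    simp
  -- bounds on ∫ W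
  have hIW : ∀ z₀ : ℝ, 1 ≤ z₀ →
      0 ≤ (∫ ω, (z₀ + 1 - Z z₀ ω) ∂P) ∧
      (∫ ω, (z₀ + 1 - Z z₀ ω) ∂P) ≤ (C₁ * ∫ ω, E₁ ω ∂P) * z₀ ^ (1 - γ) := by
    intro z₀ hz₀
    constructor
    · exact integral_nonneg (hWnn z₀ hz₀)
    · have hmono : ∫ ω, (z₀ + 1 - Z z₀ ω) ∂P ≤ ∫ ω, (C₁ * z₀ ^ (1 - γ)) * E₁ ω ∂P := by
        apply integral_mono (hintW z₀ hz₀) (hintE.const_mul _)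
        intro ω
        calc z₀ + 1 - Z z₀ ω ≤ C₁ * E₁ ω * z₀ ^ (1 - γ) := hWle z₀ hz₀ ω
          _ = (C₁ * z₀ ^ (1 - γ)) * E₁ ω := by ring
      rw [integral_const_mul] at hmono
      calc ∫ ω, (z₀ + 1 - Z z₀ ω) ∂P ≤ (C₁ * z₀ ^ (1 - γ)) * ∫ ω, E₁ ω ∂P := hmono
        _ = (C₁ * ∫ ω, E₁ ω ∂P) * z₀ ^ (1 - γ) := by ring
  constructor
  · -- tendsto part
    have hup : Tendsto (fun z₀ : ℝ => (C₁ * ∫ ω, E₁ ω ∂P) * z₀ ^ (1 - γ)) atTop (nhds 0) := by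
      have h0 : Tendsto (fun z₀ : ℝ => z₀ ^ (-(γ - 1))) atTop (nhds 0) :=
        tendsto_rpow_neg_atTop (by linarith)
      have h1 : (fun z₀ : ℝ => (C₁ * ∫ ω, E₁ ω ∂P) * z₀ ^ (1 - γ))
          = fun z₀ : ℝ => (C₁ * ∫ ω, E₁ ω ∂P) * z₀ ^ (-(γ - 1)) := by
        ext z₀; norm_num
      rw [h1]
      have := h0.const_mul (C₁ * ∫ ω, E₁ ω ∂P)
      simpa using this
    have hIW0 : Tendsto (fun z₀ : ℝ => ∫ ω, (z₀ + 1 - Z z₀ ω) ∂P) atTop (nhds 0) := by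
      apply tendsto_of_tendsto_of_tendsto_of_le_of_le' tendsto_const_nhds hup
      · filter_upwards [eventually_ge_atTop (1:ℝ)] with z₀ hz₀
        exact (hIW z₀ hz₀).1
      · filter_upwards [eventually_ge_atTop (1:ℝ)] with z₀ hz₀
        exact (hIW z₀ hz₀).2
    have hfinal := (tendsto_const_nhds (x := (1:ℝ))).sub hIW0
    rw [sub_zero] at hfinal
    apply hfinal.congr'
    filter_upwards [eventually_ge_atTop (1:ℝ)] with z₀ hz₀
    exact (hsplit z₀ hz₀).symm
  · -- second moment part
    refine ⟨∫ ω, (1 + C₁ * E₁ ω) ^ 2 ∂P, ?_⟩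
    have hintC : Integrable (fun ω => (1 + C₁ * E₁ ω) ^ 2) P := by
      have heq : (fun ω => (1 + C₁ * E₁ ω) ^ 2)
          = fun ω => (1 + (2 * C₁) * E₁ ω) + C₁ ^ 2 * E₁ ω ^ 2 := by
        ext ω; ring
      rw [heq]
      exact ((integrable_const 1).add (hintE.const_mul _)).add (hintE2.const_mul _)
    intro z₀ hz₀
    have hz₀0 : (0:ℝ) < z₀ := by linarith
    have hWE : ∀ ω, z₀ + 1 - Z z₀ ω ≤ C₁ * E₁ ω := by
      intro ω
      have h1 := hWle z₀ hz₀ ω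
      have h2 : z₀ ^ (1 - γ) ≤ 1 := Real.rpow_le_one_of_one_le_of_nonpos hz₀ (by linarith)
      have h3 : 0 ≤ C₁ * E₁ ω := mul_nonneg hC₁.le (hE₁pos ω).le
      nlinarith
    have hpt : ∀ ω, (Z z₀ ω - z₀) ^ 2 ≤ (1 + C₁ * E₁ ω) ^ 2 := by
      intro ω
      have h1 := hWE ω
      have h2 := hWnn z₀ hz₀ ω
      have h3 : 0 ≤ C₁ * E₁ ω := mul_nonneg hC₁.le (hE₁pos ω).le
      apply sq_le_sq'
      · linarith
      · linarith
    have hintSq : Integrable (fun ω => (Z z₀ ω - z₀) ^ 2) P := by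
      refine hintC.mono' (((hZm z₀).sub measurable_const).pow_const 2).aestronglyMeasurable ?_
      refine Filter.Eventually.of_forall fun ω => ?_
      rw [Real.norm_eq_abs, abs_of_nonneg (sq_nonneg _)]
      exact hpt ω
    exact integral_mono hintSq hintC hpt
end

section
/- Tail bound for the exponential-memory chain with Φ(u) = (ν + βu)^γ, γ ≥ 2: for z₀ ≥ 1 and 1 ≤ t ≤ z₀, P_{z₀}(z₀ - Z₁ + 1 ≥ t) ≤ exp(-b z₀^γ (1 - (1 - t/z₀)^γ)) with b = αβ^γ/γ; consequently for every δ > 0, sup_{z₀ > 1} E_{z₀}(e^{δ|Z₁ - z₀|}) < ∞. -/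
open MeasureTheory Filter

/-- Exponential tail of `E₁`. -/
lemma stmt17_exp_tail {Ω : Type*} [MeasurableSpace Ω] (P : Measure Ω) [IsProbabilityMeasure P]
    (E₁ : Ω → ℝ) (hE₁m : Measurable E₁)
    (hexp : ∀ t : ℝ, 0 ≤ t → P {ω | E₁ ω ≤ t} = ENNReal.ofReal (1 - Real.exp (-t)))
    (s : ℝ) : P {ω | s ≤ E₁ ω} ≤ ENNReal.ofReal (Real.exp (-s)) := by
  have key : ∀ ε : ℝ, 0 < ε →
      P {ω | s ≤ E₁ ω} ≤ ENNReal.ofReal (Real.exp (-(s - ε))) := by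
    intro ε hε
    rcases le_or_gt 0 (s - ε) with h | h
    · have hsub : {ω | s ≤ E₁ ω} ⊆ {ω | E₁ ω ≤ s - ε}ᶜ := by
        intro ω hω hmem
        simp only [Set.mem_setOf_eq, Set.mem_compl_iff] at hω hmem
        linarith
      have hms : MeasurableSet {ω | E₁ ω ≤ s - ε} := hE₁m measurableSet_Iic
      have hle1 : ENNReal.ofReal (Real.exp (-(s - ε))) ≤ 1 := by
        rw [← ENNReal.ofReal_one]
        exact ENNReal.ofReal_le_ofReal (Real.exp_le_one_iff.2 (by linarith))
      calc P {ω | s ≤ E₁ ω} ≤ P {ω | E₁ ω ≤ s - ε}ᶜ := measure_mono hsub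
        _ = 1 - P {ω | E₁ ω ≤ s - ε} := by
              rw [measure_compl hms (measure_ne_top _ _), measure_univ]
        _ = ENNReal.ofReal (Real.exp (-(s - ε))) := by
              rw [hexp _ h, ENNReal.ofReal_sub _ (Real.exp_nonneg _), ENNReal.ofReal_one,
                ENNReal.sub_sub_cancel (by simp) hle1]
    · refine le_trans prob_le_one ?_
      rw [← ENNReal.ofReal_one]
      exact ENNReal.ofReal_le_ofReal (Real.one_le_exp (by linarith))
  have htend : Tendsto (fun ε : ℝ => ENNReal.ofReal (Real.exp (-(s - ε)))) (nhdsWithin 0 (Set.Ioi 0))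
      (nhds (ENNReal.ofReal (Real.exp (-s)))) := by
    have hc : ContinuousAt (fun ε : ℝ => ENNReal.ofReal (Real.exp (-(s - ε)))) 0 := by
      apply ENNReal.continuous_ofReal.continuousAt.comp
      exact (Real.continuous_exp.comp (continuous_const.sub continuous_id).neg).continuousAt
    have h0 : ENNReal.ofReal (Real.exp (-(s - 0))) = ENNReal.ofReal (Real.exp (-s)) := by
      norm_num
    rw [← h0]
    exact hc.tendsto.mono_left nhdsWithin_le_nhds
  exact ge_of_tendsto htend (eventually_mem_nhdsWithin.mono fun ε hε => key ε hε)

/-- Algebraic identity. -/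
lemma stmt17_identity {γ z₀ t : ℝ} (hz : 0 < z₀) (ht0 : 0 ≤ t) (ht : t ≤ z₀) :
    z₀ ^ γ * (1 - (1 - t / z₀) ^ γ) = z₀ ^ γ - (z₀ - t) ^ γ := by
  have h1 : 1 - t / z₀ = (z₀ - t) / z₀ := by field_simp
  rw [h1, Real.div_rpow (by linarith) hz.le]
  have hz' : z₀ ^ γ ≠ 0 := (Real.rpow_pos_of_pos hz γ).ne'
  field_simp

/-- Integral of `c * u ^ (γ-1)` over `Ioc a b`. -/
lemma stmt17_integral_pow {γ : ℝ} (hγ : 2 ≤ γ) (c : ℝ) {a b : ℝ} (hab : a ≤ b) :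
    ∫ u in Set.Ioc a b, c * u ^ (γ - 1) = c * ((b ^ γ - a ^ γ) / γ) := by
  rw [← intervalIntegral.integral_of_le hab, intervalIntegral.integral_const_mul,
    integral_rpow (Or.inl (by linarith))]
  have h : γ - 1 + 1 = γ := by ring
  rw [h]

lemma stmt17_integrableOn_pow {γ : ℝ} (hγ : 2 ≤ γ) (c : ℝ) (a b : ℝ) :
    IntegrableOn (fun u : ℝ => c * u ^ (γ - 1)) (Set.Ioc a b) := by
  have h := (intervalIntegral.intervalIntegrable_rpow' (a := a) (b := b) (r := γ - 1)
    (by linarith)).const_mul c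
  exact h.1

/-- Part 1 as a standalone lemma. -/
lemma stmt17_part1 {Ω : Type*} [MeasurableSpace Ω] (P : Measure Ω) [IsProbabilityMeasure P]
    (E₁ : Ω → ℝ) (hE₁m : Measurable E₁)
    (hexp : ∀ t : ℝ, 0 ≤ t → P {ω | E₁ ω ≤ t} = ENNReal.ofReal (1 - Real.exp (-t)))
    (α β ν γ : ℝ) (hα : 0 < α) (hβ : 0 < β) (hν : 0 < ν) (hγ : 2 ≤ γ)
    (Z : ℝ → Ω → ℝ)
    (hZ : ∀ z₀, 1 ≤ z₀ → ∀ ω, 1 < Z z₀ ω ∧ Z z₀ ω ≤ z₀ + 1 ∧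
      α * ∫ u in Set.Ioc (Z z₀ ω - 1) z₀, (ν + β * u) ^ γ / u = E₁ ω) :
    ∀ z₀ : ℝ, 1 ≤ z₀ → ∀ t : ℝ, 1 ≤ t → t ≤ z₀ →
      P {ω | t ≤ z₀ - Z z₀ ω + 1}
        ≤ ENNReal.ofReal
            (Real.exp (-(α * β ^ γ / γ) * (z₀ ^ γ * (1 - (1 - t / z₀) ^ γ)))) := by
  intro z₀ hz₀ t ht1 htz
  have hz0 : (0:ℝ) < z₀ := by linarith
  have hγ0 : (0:ℝ) < γ := by linarith
  set s := α * β ^ γ / γ * (z₀ ^ γ * (1 - (1 - t / z₀) ^ γ)) with hs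
  have hsub : {ω | t ≤ z₀ - Z z₀ ω + 1} ⊆ {ω | s ≤ E₁ ω} := by
    intro ω hω
    simp only [Set.mem_setOf_eq] at hω ⊢
    obtain ⟨hZ1, hZ2, hZint⟩ := hZ z₀ hz₀ ω
    set c := Z z₀ ω - 1 with hc
    have hc0 : 0 < c := by simp only [hc]; linarith
    have hcz : c ≤ z₀ - t := by simp only [hc]; linarith
    have hcz' : c ≤ z₀ := by linarith
    -- integrability of both functions on Ioc c z₀
    have hgint : IntegrableOn (fun u : ℝ => β ^ γ * u ^ (γ - 1)) (Set.Ioc c z₀) :=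
      stmt17_integrableOn_pow hγ (β ^ γ) c z₀
    have hfint : IntegrableOn (fun u : ℝ => (ν + β * u) ^ γ / u) (Set.Ioc c z₀) := by
      have hcont : ContinuousOn (fun u : ℝ => (ν + β * u) ^ γ / u) (Set.Icc c z₀) := by
        apply ContinuousOn.div
        · exact ((continuous_const.add (continuous_const.mul continuous_id)).continuousOn).rpow_const
            (fun x _ => Or.inr (by linarith))
        · exact continuousOn_id
        · intro x hx; exact ne_of_gt (lt_of_lt_of_le hc0 hx.1)
      exact hcont.integrableOn_Icc.mono_set Set.Ioc_subset_Icc_self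
    have step1 : ∫ u in Set.Ioc (z₀ - t) z₀, β ^ γ * u ^ (γ - 1)
        ≤ ∫ u in Set.Ioc c z₀, β ^ γ * u ^ (γ - 1) := by
      apply setIntegral_mono_set hgint
      · refine (ae_restrict_iff' measurableSet_Ioc).2 (ae_of_all _ fun u hu => ?_)
        have hu0 : 0 < u := lt_trans hc0 hu.1
        exact mul_nonneg (Real.rpow_nonneg hβ.le _) (Real.rpow_nonneg hu0.le _)
      · exact (Set.Ioc_subset_Ioc_left hcz).eventuallyLE
    have step2 : ∫ u in Set.Ioc c z₀, β ^ γ * u ^ (γ - 1)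
        ≤ ∫ u in Set.Ioc c z₀, (ν + β * u) ^ γ / u := by
      refine setIntegral_mono_on hgint hfint measurableSet_Ioc fun u hu => ?_
      have hu0 : 0 < u := lt_trans hc0 hu.1
      have h2 : (β * u) ^ γ = β ^ γ * u ^ γ := Real.mul_rpow hβ.le hu0.le
      have h3 : u ^ (γ - 1) = u ^ γ / u := by
        rw [Real.rpow_sub hu0, Real.rpow_one]
      calc β ^ γ * u ^ (γ - 1) = (β * u) ^ γ / u := by rw [h2, h3, mul_div_assoc]
        _ ≤ (ν + β * u) ^ γ / u := by
            apply div_le_div_of_nonneg_right ?_ hu0.le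
            exact Real.rpow_le_rpow (by positivity) (by linarith) (by linarith)
    have hval : ∫ u in Set.Ioc (z₀ - t) z₀, β ^ γ * u ^ (γ - 1)
        = β ^ γ * ((z₀ ^ γ - (z₀ - t) ^ γ) / γ) :=
      stmt17_integral_pow hγ (β ^ γ) (by linarith)
    have hseq : s = α * (β ^ γ * ((z₀ ^ γ - (z₀ - t) ^ γ) / γ)) := by
      rw [hs, stmt17_identity hz0 (by linarith) htz]
      field_simp
    calc s = α * ∫ u in Set.Ioc (z₀ - t) z₀, β ^ γ * u ^ (γ - 1) := by rw [hval, hseq]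
      _ ≤ α * ∫ u in Set.Ioc c z₀, (ν + β * u) ^ γ / u :=
          mul_le_mul_of_nonneg_left (le_trans step1 step2) hα.le
      _ = E₁ ω := hZint
  calc P {ω | t ≤ z₀ - Z z₀ ω + 1} ≤ P {ω | s ≤ E₁ ω} := measure_mono hsub
    _ ≤ ENNReal.ofReal (Real.exp (-s)) := stmt17_exp_tail P E₁ hE₁m hexp s
    _ = _ := by rw [hs, neg_mul]

/-- Tail bound for the exponential-memory chain with `Φ(u) = (ν + βu)^γ`, `γ ≥ 2`: for
`z₀ ≥ 1` and `1 ≤ t ≤ z₀`, `P(z₀ - Z₁ + 1 ≥ t) ≤ exp(-b z₀^γ (1 - (1 - t/z₀)^γ))` with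
`b = αβ^γ/γ`; consequently `sup_{z₀ > 1} E(e^{δ|Z₁ - z₀|}) < ∞` for every `δ > 0`. -/
theorem stmt17 {Ω : Type*} [MeasurableSpace Ω] (P : Measure Ω) [IsProbabilityMeasure P]
    (E₁ : Ω → ℝ) (hE₁m : Measurable E₁) (hE₁pos : ∀ ω, 0 < E₁ ω)
    (hexp : ∀ t : ℝ, 0 ≤ t → P {ω | E₁ ω ≤ t} = ENNReal.ofReal (1 - Real.exp (-t)))
    (α β ν γ : ℝ) (hα : 0 < α) (hβ : 0 < β) (hν : 0 < ν) (hγ : 2 ≤ γ)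
    (Z : ℝ → Ω → ℝ) (hZm : ∀ z₀, Measurable (Z z₀))
    (hZ : ∀ z₀, 1 ≤ z₀ → ∀ ω, 1 < Z z₀ ω ∧ Z z₀ ω ≤ z₀ + 1 ∧
      α * ∫ u in Set.Ioc (Z z₀ ω - 1) z₀, (ν + β * u) ^ γ / u = E₁ ω) :
    (∀ z₀ : ℝ, 1 ≤ z₀ → ∀ t : ℝ, 1 ≤ t → t ≤ z₀ →
      P {ω | t ≤ z₀ - Z z₀ ω + 1}
        ≤ ENNReal.ofReal
            (Real.exp (-(α * β ^ γ / γ) * (z₀ ^ γ * (1 - (1 - t / z₀) ^ γ))))) ∧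
    ∀ δ : ℝ, 0 < δ → ∃ C : ℝ, ∀ z₀ : ℝ, 1 < z₀ →
      ∫ ω, Real.exp (δ * |Z z₀ ω - z₀|) ∂P ≤ C := by
  have part1 := stmt17_part1 P E₁ hE₁m hexp α β ν γ hα hβ hν hγ Z hZ
  refine ⟨part1, ?_⟩
  intro δ hδ
  have hγ0 : (0:ℝ) < γ := by linarith
  have hβγ : 0 < β ^ γ := Real.rpow_pos_of_pos hβ γ
  set b := α * β ^ γ / γ with hb
  have hb0 : 0 < b := by positivity
  set T := max 1 (δ / b) with hT
  have hT1 : (1:ℝ) ≤ T := le_max_left _ _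
  have hTb : δ ≤ b * T := by
    have h1 : δ / b ≤ T := le_max_right _ _
    calc δ = b * (δ / b) := by field_simp
      _ ≤ b * T := mul_le_mul_of_nonneg_left h1 hb0.le
  refine ⟨Real.exp (δ * (T + 1)) + Real.exp (δ * (T + 1)), ?_⟩
  intro z₀ hz₀
  have hz₀1 : (1:ℝ) ≤ z₀ := hz₀.le
  have hz₀0 : (0:ℝ) < z₀ := by linarith
  -- pointwise facts
  have hZω := hZ z₀ hz₀1
  have habs : ∀ ω, |Z z₀ ω - z₀| ≤ z₀ := by
    intro ω
    obtain ⟨h1, h2, -⟩ := hZω ω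
    rw [abs_le]; constructor <;> linarith
  -- measurability / integrability of f
  have hfm : Measurable fun ω => Real.exp (δ * |Z z₀ ω - z₀|) :=
    (measurable_const.mul ((hZm z₀).sub measurable_const).abs).exp
  have hf_int : Integrable (fun ω => Real.exp (δ * |Z z₀ ω - z₀|)) P := by
    refine Integrable.mono' (integrable_const (Real.exp (δ * z₀))) hfm.aestronglyMeasurable
      (ae_of_all _ fun ω => ?_)
    rw [Real.norm_eq_abs, abs_of_pos (Real.exp_pos _)]
    exact Real.exp_le_exp.2 (mul_le_mul_of_nonneg_left (habs ω) hδ.le)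
  have hexpC : (0:ℝ) < Real.exp (δ * (T + 1)) := Real.exp_pos _
  rcases le_or_gt z₀ T with hcase | hcase
  · -- small z₀: trivial bound
    have hbd : ∀ ω, Real.exp (δ * |Z z₀ ω - z₀|) ≤ Real.exp (δ * (T + 1)) := by
      intro ω
      apply Real.exp_le_exp.2
      apply mul_le_mul_of_nonneg_left _ hδ.le
      calc |Z z₀ ω - z₀| ≤ z₀ := habs ω
        _ ≤ T + 1 := by linarith
    calc ∫ ω, Real.exp (δ * |Z z₀ ω - z₀|) ∂P
        ≤ ∫ _ω, Real.exp (δ * (T + 1)) ∂P :=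
          integral_mono hf_int (integrable_const _) hbd
      _ = Real.exp (δ * (T + 1)) := by simp
      _ ≤ _ := by linarith
  · -- large z₀: split at the event A
    set W : Ω → ℝ := fun ω => z₀ - Z z₀ ω + 1 with hW
    have hWm : Measurable W := (measurable_const.sub (hZm z₀)).add_const 1
    have hWle : ∀ ω, W ω ≤ z₀ := by
      intro ω; obtain ⟨h1, -, -⟩ := hZω ω; simp only [hW]; linarith
    set A := {ω | T ≤ W ω} with hA
    have hAm : MeasurableSet A := measurableSet_le measurable_const hWm
    set h : Ω → ℝ := fun ω => Real.exp (δ * W ω) with hh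
    have hhm : Measurable h := (measurable_const.mul hWm).exp
    have hh_int : Integrable h P := by
      refine Integrable.mono' (integrable_const (Real.exp (δ * z₀))) hhm.aestronglyMeasurable
        (ae_of_all _ fun ω => ?_)
      rw [Real.norm_eq_abs, abs_of_pos (Real.exp_pos _)]
      exact Real.exp_le_exp.2 (mul_le_mul_of_nonneg_left (hWle ω) hδ.le)
    -- tail bound for A with t = T
    have hPA : (P A).toReal ≤ Real.exp (-(δ * z₀)) := by
      have hp := part1 z₀ hz₀1 T hT1 hcase.le
      have hiden : z₀ ^ γ * (1 - (1 - T / z₀) ^ γ) = z₀ ^ γ - (z₀ - T) ^ γ :=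
        stmt17_identity hz₀0 (by linarith) hcase.le
      -- lower bound on the exponent
      have hzT : 0 < z₀ - T := by linarith
      have e1 : z₀ ^ γ = z₀ ^ (γ - 1) * z₀ := by
        rw [← Real.rpow_add_one hz₀0.ne' (γ - 1)]; ring_nf
      have e2 : (z₀ - T) ^ γ = (z₀ - T) ^ (γ - 1) * (z₀ - T) := by
        rw [← Real.rpow_add_one hzT.ne' (γ - 1)]; ring_nf
      have e3 : (z₀ - T) ^ (γ - 1) ≤ z₀ ^ (γ - 1) :=
        Real.rpow_le_rpow (by linarith) (by linarith) (by linarith)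
      have e4 : z₀ ≤ z₀ ^ (γ - 1) := by
        have := (Real.rpow_le_rpow_left_iff hz₀).2 (show (1:ℝ) ≤ γ - 1 by linarith)
        rwa [Real.rpow_one] at this
      have hkey : δ * z₀ ≤ b * (z₀ ^ γ - (z₀ - T) ^ γ) := by
        have hA1 : z₀ ^ (γ - 1) * T ≤ z₀ ^ γ - (z₀ - T) ^ γ := by
          rw [e1, e2]
          have := mul_le_mul_of_nonneg_right e3 hzT.le
          nlinarith
        have hA2 : δ * z₀ ≤ b * (z₀ ^ (γ - 1) * T) := by
          have h5 : δ * z₀ ≤ δ * z₀ ^ (γ - 1) := mul_le_mul_of_nonneg_left e4 hδ.le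
          have h6 : δ * z₀ ^ (γ - 1) ≤ (b * T) * z₀ ^ (γ - 1) :=
            mul_le_mul_of_nonneg_right hTb (Real.rpow_nonneg hz₀0.le _)
          calc δ * z₀ ≤ δ * z₀ ^ (γ - 1) := h5
            _ ≤ (b * T) * z₀ ^ (γ - 1) := h6
            _ = b * (z₀ ^ (γ - 1) * T) := by ring
        exact hA2.trans (mul_le_mul_of_nonneg_left hA1 hb0.le)
      have h7 : (P A).toReal ≤ Real.exp (-b * (z₀ ^ γ * (1 - (1 - T / z₀) ^ γ))) :=
        ENNReal.toReal_le_of_le_ofReal (Real.exp_nonneg _) hp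
      refine h7.trans (Real.exp_le_exp.2 ?_)
      rw [hiden, neg_mul]
      linarith
    -- split integral
    have hsplit : ∫ ω, h ω ∂P = (∫ ω in A, h ω ∂P) + ∫ ω in Aᶜ, h ω ∂P :=
      (integral_add_compl hAm hh_int).symm
    have hbd1 : ∫ ω in A, h ω ∂P ≤ 1 := by
      have hstep : ∫ ω in A, h ω ∂P ≤ ∫ _ω in A, Real.exp (δ * z₀) ∂P := by
        refine setIntegral_mono_on hh_int.integrableOn (integrable_const _).integrableOn hAm
          fun ω _ => ?_
        exact Real.exp_le_exp.2 (mul_le_mul_of_nonneg_left (hWle ω) hδ.le)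
      have hconst : ∫ _ω in A, Real.exp (δ * z₀) ∂P = (P A).toReal * Real.exp (δ * z₀) := by
        rw [setIntegral_const]; simp [smul_eq_mul, Measure.real_def]
      calc ∫ ω in A, h ω ∂P ≤ (P A).toReal * Real.exp (δ * z₀) := by rw [← hconst]; exact hstep
        _ ≤ Real.exp (-(δ * z₀)) * Real.exp (δ * z₀) :=
            mul_le_mul_of_nonneg_right hPA (Real.exp_nonneg _)
        _ = 1 := by rw [← Real.exp_add]; simp
    have hbd2 : ∫ ω in Aᶜ, h ω ∂P ≤ Real.exp (δ * T) := by
      have hstep : ∫ ω in Aᶜ, h ω ∂P ≤ ∫ _ω in Aᶜ, Real.exp (δ * T) ∂P := by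
        refine setIntegral_mono_on hh_int.integrableOn (integrable_const _).integrableOn hAm.compl
          fun ω hω => ?_
        have : W ω < T := by
          by_contra hcon
          exact hω (le_of_not_gt hcon)
        exact Real.exp_le_exp.2 (mul_le_mul_of_nonneg_left this.le hδ.le)
      have hPAc : (P Aᶜ).toReal ≤ 1 :=
        ENNReal.toReal_le_of_le_ofReal zero_le_one (by simpa using (prob_le_one (μ := P) (s := Aᶜ)))
      calc ∫ ω in Aᶜ, h ω ∂P ≤ (P Aᶜ).toReal * Real.exp (δ * T) := by
            rw [← smul_eq_mul, ← Measure.real_def, ← setIntegral_const]; exact hstep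
        _ ≤ 1 * Real.exp (δ * T) :=
            mul_le_mul_of_nonneg_right hPAc (Real.exp_nonneg _)
        _ = Real.exp (δ * T) := one_mul _
    -- combine
    have hfh : ∀ ω, Real.exp (δ * |Z z₀ ω - z₀|) ≤ Real.exp δ * h ω := by
      intro ω
      obtain ⟨h1, h2, -⟩ := hZω ω
      have habs2 : |Z z₀ ω - z₀| ≤ W ω + 1 := by
        rw [abs_le]; constructor <;> (simp only [hW]; linarith)
      calc Real.exp (δ * |Z z₀ ω - z₀|) ≤ Real.exp (δ * (W ω + 1)) :=
            Real.exp_le_exp.2 (mul_le_mul_of_nonneg_left habs2 hδ.le)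
        _ = Real.exp δ * h ω := by rw [hh, ← Real.exp_add]; ring_nf
    calc ∫ ω, Real.exp (δ * |Z z₀ ω - z₀|) ∂P
        ≤ ∫ ω, Real.exp δ * h ω ∂P := integral_mono hf_int (hh_int.const_mul _) hfh
      _ = Real.exp δ * ∫ ω, h ω ∂P := integral_const_mul _ _
      _ = Real.exp δ * ((∫ ω in A, h ω ∂P) + ∫ ω in Aᶜ, h ω ∂P) := by rw [hsplit]
      _ ≤ Real.exp δ * (1 + Real.exp (δ * T)) := by
            apply mul_le_mul_of_nonneg_left _ (Real.exp_nonneg _)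
            linarith
      _ = Real.exp δ + Real.exp δ * Real.exp (δ * T) := by ring
      _ = Real.exp δ + Real.exp (δ * (T + 1)) := by rw [← Real.exp_add]; ring_nf
      _ ≤ _ := by
            have : Real.exp δ ≤ Real.exp (δ * (T + 1)) := by
              apply Real.exp_le_exp.2; nlinarith
            linarith
end
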